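/- arXiv:2102.02666 — 9 statements merged into one kernel-verified Lean document; each statement's English description precedes it below -/
import Mathlib

section
/- Let X and Y be random variables on a probability space taking values in [0,1], and let ε > 0. Suppose that for all Borel sets E, E' ⊆ ℝ one has |P(X ∈ E and Y ∈ E') − P(X ∈ E)·P(Y ∈ E')| ≤ ε. Then the covariance of X and Y satisfies |E[XY] − E[X]·E[Y]| ≤ ε. -/
open MeasureTheory Set

/-!
For `x, y ∈ [0, 1]` the product `x * y` is the area of `{(s, t) ∈ (0, 1]² | s < x, t < y}`, so
by Fubini `E[XY] = ∫_{(0,1]²} P(X > s, Y > t) ds dt`; applying the same formula on `P ⊗ P` gives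
`E[X] E[Y] = ∫_{(0,1]²} P(X > s) P(Y > t) ds dt` (Hoeffding's identity). Each integrand difference
is bounded by `ε` (take `E = (s, ∞)`, `E' = (t, ∞)`), and the unit square has area `1`.
-/

def unitSquare : Set (ℝ × ℝ) := Ioc 0 1 ×ˢ Ioc 0 1

instance : IsProbabilityMeasure (volume.restrict unitSquare) := by
  constructor
  rw [Measure.restrict_apply_univ, unitSquare, Measure.volume_eq_prod, Measure.prod_prod,
    Real.volume_Ioc]
  norm_num

lemma volume_Iio_inter_Ioc_zero_one {x : ℝ} (hx : x ∈ Icc 0 1) :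
    volume (Iio x ∩ Ioc 0 1) = ENNReal.ofReal x := by
  have : Iio x ∩ Ioc 0 1 = Ioo 0 x := by
    ext s
    simp only [mem_inter_iff, mem_Iio, mem_Ioc, mem_Ioo]
    constructor
    · rintro ⟨hsx, hs0, -⟩
      exact ⟨hs0, hsx⟩
    · rintro ⟨hs0, hsx⟩
      exact ⟨hsx, hs0, hsx.le.trans hx.2⟩
  rw [this, Real.volume_Ioo, sub_zero]

lemma volume_restrict_unitSquare_lt_and_lt {x y : ℝ} (hx : x ∈ Icc 0 1) (hy : y ∈ Icc 0 1) :
    volume.restrict unitSquare {p | p.1 < x ∧ p.2 < y} = ENNReal.ofReal (x * y) := by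
  change volume.restrict unitSquare (Iio x ×ˢ Iio y) = _
  rw [unitSquare, Measure.volume_eq_prod, ← Measure.prod_restrict, Measure.prod_prod,
    Measure.restrict_apply measurableSet_Iio, Measure.restrict_apply measurableSet_Iio,
    volume_Iio_inter_Ioc_zero_one hx, volume_Iio_inter_Ioc_zero_one hy, ENNReal.ofReal_mul hx.1]

section JointSurvival

variable {Ω : Type*} [MeasurableSpace Ω] (μ : Measure Ω) {f g : Ω → ℝ}

def jointSurvival (f g : Ω → ℝ) (p : ℝ × ℝ) : ℝ :=
  μ.real {ω | p.1 < f ω ∧ p.2 < g ω}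

lemma measurableSet_lt_and_lt (hf : Measurable f) (hg : Measurable g) :
    MeasurableSet {q : Ω × (ℝ × ℝ) | q.2.1 < f q.1 ∧ q.2.2 < g q.1} :=
  (measurableSet_lt (measurable_fst.comp measurable_snd) (hf.comp measurable_fst)).inter
    (measurableSet_lt (measurable_snd.comp measurable_snd) (hg.comp measurable_fst))

lemma measurable_jointSurvival [SFinite μ] (hf : Measurable f) (hg : Measurable g) :
    Measurable (jointSurvival μ f g) :=
  (measurable_measure_prodMk_right (μ := μ) (measurableSet_lt_and_lt hf hg)).ennreal_toReal

lemma jointSurvival_prod {Ω' : Type*} [MeasurableSpace Ω'] (ν : Measure Ω') [SFinite ν]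
    {g : Ω' → ℝ} (p : ℝ × ℝ) :
    jointSurvival (μ.prod ν) (f ∘ Prod.fst) (g ∘ Prod.snd) p
      = μ.real {ω | p.1 < f ω} * ν.real {ω' | p.2 < g ω'} :=
  measureReal_prod_prod {ω | p.1 < f ω} {ω' | p.2 < g ω'}

lemma lintegral_ofReal_mul_eq_setLIntegral_measure [SFinite μ] (hf : Measurable f)
    (hg : Measurable g) (hf01 : ∀ ω, f ω ∈ Icc 0 1) (hg01 : ∀ ω, g ω ∈ Icc 0 1) :
    ∫⁻ ω, ENNReal.ofReal (f ω * g ω) ∂μ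
      = ∫⁻ p in unitSquare, μ {ω | p.1 < f ω ∧ p.2 < g ω} := by
  have hS := measurableSet_lt_and_lt hf hg
  calc ∫⁻ ω, ENNReal.ofReal (f ω * g ω) ∂μ
      = ∫⁻ ω, volume.restrict unitSquare {p | p.1 < f ω ∧ p.2 < g ω} ∂μ :=
        lintegral_congr fun ω => (volume_restrict_unitSquare_lt_and_lt (hf01 ω) (hg01 ω)).symm
    _ = (μ.prod (volume.restrict unitSquare)) {q | q.2.1 < f q.1 ∧ q.2.2 < g q.1} :=
        (Measure.prod_apply hS).symm
    _ = ∫⁻ p in unitSquare, μ {ω | p.1 < f ω ∧ p.2 < g ω} := Measure.prod_apply_symm hS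

lemma integral_mul_eq_setIntegral_jointSurvival [IsFiniteMeasure μ] (hf : Measurable f)
    (hg : Measurable g) (hf01 : ∀ ω, f ω ∈ Icc 0 1) (hg01 : ∀ ω, g ω ∈ Icc 0 1) :
    ∫ ω, f ω * g ω ∂μ = ∫ p in unitSquare, jointSurvival μ f g p := by
  have hnonneg : 0 ≤ᵐ[μ] fun ω => f ω * g ω :=
    ae_of_all _ fun ω => mul_nonneg (hf01 ω).1 (hg01 ω).1
  rw [integral_eq_lintegral_of_nonneg_ae hnonneg (hf.mul hg).aestronglyMeasurable,
    lintegral_ofReal_mul_eq_setLIntegral_measure μ hf hg hf01 hg01]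
  exact (integral_toReal
    (measurable_measure_prodMk_right (measurableSet_lt_and_lt hf hg)).aemeasurable
    (ae_of_all _ fun _ => measure_lt_top _ _)).symm

lemma integral_mul_integral_eq_setIntegral_measureReal_mul [IsFiniteMeasure μ]
    (hf : Measurable f) (hg : Measurable g) (hf01 : ∀ ω, f ω ∈ Icc 0 1)
    (hg01 : ∀ ω, g ω ∈ Icc 0 1) :
    (∫ ω, f ω ∂μ) * (∫ ω, g ω ∂μ)
      = ∫ p in unitSquare, μ.real {ω | p.1 < f ω} * μ.real {ω | p.2 < g ω} := by
  rw [← integral_prod_mul]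
  exact (integral_mul_eq_setIntegral_jointSurvival (μ.prod μ) (hf.comp measurable_fst)
    (hg.comp measurable_snd) (fun q => hf01 q.1) (fun q => hg01 q.2)).trans
    (integral_congr_ae (ae_of_all _ fun p => jointSurvival_prod μ μ p))

lemma integral_mul_sub_mul_integral_eq [IsFiniteMeasure μ] (hf : Measurable f)
    (hg : Measurable g) (hf01 : ∀ ω, f ω ∈ Icc 0 1) (hg01 : ∀ ω, g ω ∈ Icc 0 1) :
    (∫ ω, f ω * g ω ∂μ) - (∫ ω, f ω ∂μ) * (∫ ω, g ω ∂μ)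
      = ∫ p in unitSquare,
          (jointSurvival μ f g p - μ.real {ω | p.1 < f ω} * μ.real {ω | p.2 < g ω}) := by
  have hbound : ∀ s, ‖μ.real s‖ ≤ μ.real univ := fun s => by
    rw [Real.norm_of_nonneg measureReal_nonneg]
    exact measureReal_mono (subset_univ s)
  have hJ : Integrable (jointSurvival μ f g) (volume.restrict unitSquare) :=
    .of_bound (measurable_jointSurvival μ hf hg).aestronglyMeasurable _
      (ae_of_all _ fun _ => hbound _)
  have hG : Integrable (fun p : ℝ × ℝ => μ.real {ω | p.1 < f ω} * μ.real {ω | p.2 < g ω})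
      (volume.restrict unitSquare) := by
    refine .of_bound ?_ (μ.real univ * μ.real univ) (ae_of_all _ fun p => ?_)
    · have hprod : (fun p : ℝ × ℝ => μ.real {ω | p.1 < f ω} * μ.real {ω | p.2 < g ω})
          = jointSurvival (μ.prod μ) (f ∘ Prod.fst) (g ∘ Prod.snd) :=
        funext fun p => (jointSurvival_prod μ μ p).symm
      rw [hprod]
      exact (measurable_jointSurvival _ (hf.comp measurable_fst)
        (hg.comp measurable_snd)).aestronglyMeasurable
    · rw [norm_mul]
      exact mul_le_mul (hbound _) (hbound _) (norm_nonneg _) measureReal_nonneg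
  rw [integral_mul_eq_setIntegral_jointSurvival μ hf hg hf01 hg01,
    integral_mul_integral_eq_setIntegral_measureReal_mul μ hf hg hf01 hg01, integral_sub hJ hG]

end JointSurvival

theorem eps_independent_cov_bound_general
    {Ω : Type*} [MeasurableSpace Ω] (P : Measure Ω) [IsProbabilityMeasure P]
    {X Y : Ω → ℝ} (hX : Measurable X) (hY : Measurable Y)
    (hX01 : ∀ ω, X ω ∈ Set.Icc (0 : ℝ) 1) (hY01 : ∀ ω, Y ω ∈ Set.Icc (0 : ℝ) 1)
    {ε : ℝ}
    (hind : ∀ E E' : Set ℝ, MeasurableSet E → MeasurableSet E' →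
      |(P (X ⁻¹' E ∩ Y ⁻¹' E')).toReal -
        (P (X ⁻¹' E)).toReal * (P (Y ⁻¹' E')).toReal| ≤ ε) :
    |(∫ ω, X ω * Y ω ∂P) - (∫ ω, X ω ∂P) * (∫ ω, Y ω ∂P)| ≤ ε := by
  rw [integral_mul_sub_mul_integral_eq P hX hY hX01 hY01, ← Real.norm_eq_abs]
  calc _ ≤ ε * (volume.restrict unitSquare).real univ :=
        norm_integral_le_of_norm_le_const <| ae_of_all _ fun p =>
          hind (Ioi p.1) (Ioi p.2) measurableSet_Ioi measurableSet_Ioi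
    _ = ε := by rw [probReal_univ, mul_one]

/-- If `X, Y` take values in `[0,1]` and are `ε`-independent, i.e.
`|P(X ∈ E, Y ∈ E') − P(X ∈ E)·P(Y ∈ E')| ≤ ε` for all Borel sets `E, E'`,
then `|E[XY] − E[X]·E[Y]| ≤ ε`. -/
theorem eps_independent_cov_bound
    {Ω : Type*} [MeasurableSpace Ω] (P : Measure Ω) [IsProbabilityMeasure P]
    {X Y : Ω → ℝ} (hX : Measurable X) (hY : Measurable Y)
    (hX01 : ∀ ω, X ω ∈ Set.Icc (0 : ℝ) 1) (hY01 : ∀ ω, Y ω ∈ Set.Icc (0 : ℝ) 1)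
    {ε : ℝ} (hε : 0 < ε)
    (hind : ∀ E E' : Set ℝ, MeasurableSet E → MeasurableSet E' →
      |(P (X ⁻¹' E ∩ Y ⁻¹' E')).toReal -
        (P (X ⁻¹' E)).toReal * (P (Y ⁻¹' E')).toReal| ≤ ε) :
    |(∫ ω, X ω * Y ω ∂P) - (∫ ω, X ω ∂P) * (∫ ω, Y ω ∂P)| ≤ ε :=
  eps_independent_cov_bound_general P hX hY hX01 hY01 hind
end

section
/- Let α > 0 and let G₁, G₂ be Borel probability measures on ℝ supported on the open interval (0,1), mutually absolutely continuous, whose Radon–Nikodym derivative dG₁/dG₂ equals the function r ↦ α(1−r)/r, G₂-almost everywhere. Then the ratio of cumulative distribution functions r ↦ G₁([0,r]) / G₂([0,r]) is non-increasing on the set of r ∈ (0,1) with G₂([0,r]) > 0; that is, for all 0 < r ≤ r' < 1 with G₂([0,r]) > 0, one has G₁([0,r])·G₂([0,r']) ≥ G₁([0,r'])·G₂([0,r]). -/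
/-!
The density `f(x) = α(1 - x)/x` of `G₁` with respect to `G₂` is decreasing on `(0,1)`. Splitting
`[0, r'] = [0, r] ∪ (r, r']` and comparing `f` with its value `f r` at the cut, one gets
`G₁(r, r'] ≤ f r · G₂(r, r']` and `f r · G₂[0, r] ≤ G₁[0, r]`; multiplying these crosswise gives
the inequality.
-/

open MeasureTheory Set

namespace MeasureTheory.Measure

variable {X : Type*} [MeasurableSpace X] {μ ν : Measure X} [μ.HaveLebesgueDecomposition ν]
  {s : Set X} {c : ENNReal}

lemma measure_le_const_mul_of_rnDeriv_le (hμν : μ ≪ ν) (hs : MeasurableSet s)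
    (h : ∀ᵐ x ∂ν, x ∈ s → μ.rnDeriv ν x ≤ c) : μ s ≤ c * ν s := by
  rw [← setLIntegral_rnDeriv' hμν hs, ← setLIntegral_const]
  exact setLIntegral_mono_ae' hs h

lemma const_mul_le_measure_of_le_rnDeriv (hμν : μ ≪ ν) (hs : MeasurableSet s)
    (h : ∀ᵐ x ∂ν, x ∈ s → c ≤ μ.rnDeriv ν x) : c * ν s ≤ μ s := by
  rw [← setLIntegral_rnDeriv' hμν hs, ← setLIntegral_const]
  exact setLIntegral_mono_ae' hs h

end MeasureTheory.Measure

open MeasureTheory.Measure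

lemma MeasureTheory.measure_union_mul_le_mul_measure_union {X : Type*} [MeasurableSpace X]
    {μ ν : Measure X} {s t : Set X} {c : ENNReal} (hst : Disjoint s t) (ht : MeasurableSet t)
    (hs_ge : c * ν s ≤ μ s) (ht_le : μ t ≤ c * ν t) :
    μ (s ∪ t) * ν s ≤ μ s * ν (s ∪ t) := by
  rw [measure_union hst ht, measure_union hst ht, add_mul, mul_add]
  gcongr _ + ?_
  calc μ t * ν s ≤ c * ν t * ν s := by gcongr
    _ = ν t * (c * ν s) := by ring
    _ ≤ ν t * μ s := by gcongr
    _ = μ s * ν t := mul_comm _ _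

theorem MeasureTheory.measure_Icc_mul_le_of_antitoneOn_rnDeriv {μ ν : Measure ℝ}
    [μ.HaveLebesgueDecomposition ν] (hμν : μ ≪ ν) {S : Set ℝ} (hS : ∀ᵐ x ∂ν, x ∈ S)
    {g : ℝ → ENNReal} (hg : AntitoneOn g S) (hrn : μ.rnDeriv ν =ᵐ[ν] g)
    {a r r' : ℝ} (har : a ≤ r) (hr : r ∈ S) (hrr' : r ≤ r') :
    μ (Icc a r') * ν (Icc a r) ≤ μ (Icc a r) * ν (Icc a r') := by
  have hdisj : Disjoint (Icc a r) (Ioc r r') :=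
    disjoint_left.mpr fun _ hx hx' => hx'.1.not_ge hx.2
  rw [← Icc_union_Ioc_eq_Icc har hrr']
  refine measure_union_mul_le_mul_measure_union (c := g r) hdisj measurableSet_Ioc ?_ ?_
  · refine const_mul_le_measure_of_le_rnDeriv hμν measurableSet_Icc ?_
    filter_upwards [hS, hrn] with x hxS hx hxs
    exact hx ▸ hg hxS hr hxs.2
  · refine measure_le_const_mul_of_rnDeriv_le hμν measurableSet_Ioc ?_
    filter_upwards [hS, hrn] with x hxS hx hxs
    exact hx ▸ hg hr hxS hxs.1.le

lemma antitoneOn_ofReal_mul_one_sub_div_self {α : ℝ} (hα : 0 ≤ α) :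
    AntitoneOn (fun x : ℝ => ENNReal.ofReal (α * ((1 - x) / x))) (Ioi 0) := by
  intro x hx y hy hxy
  refine ENNReal.ofReal_le_ofReal (mul_le_mul_of_nonneg_left ?_ hα)
  rw [sub_div, sub_div, div_self (ne_of_gt hy), div_self (ne_of_gt hx)]
  gcongr

theorem bayes_cdf_ratio_monotone_general
    {α : ℝ} (hα : 0 < α)
    (G₁ G₂ : Measure ℝ) [IsProbabilityMeasure G₁] [IsProbabilityMeasure G₂]
    (hsupp₂ : G₂ (Set.Ioo (0 : ℝ) 1)ᶜ = 0)
    (hac₁ : G₁ ≪ G₂)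
    (hrn : G₁.rnDeriv G₂ =ᵐ[G₂] fun r => ENNReal.ofReal (α * ((1 - r) / r))) :
    ∀ r r' : ℝ, 0 < r → r ≤ r' → r' < 1 → 0 < (G₂ (Set.Icc 0 r)).toReal →
      (G₁ (Set.Icc 0 r')).toReal * (G₂ (Set.Icc 0 r)).toReal ≤
        (G₁ (Set.Icc 0 r)).toReal * (G₂ (Set.Icc 0 r')).toReal := by
  intro r r' hr hrr' _ _
  have hpos : ∀ᵐ x ∂G₂, x ∈ Ioi (0 : ℝ) :=
    (ae_iff.mpr hsupp₂).mono fun _ hx => hx.1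
  have key := measure_Icc_mul_le_of_antitoneOn_rnDeriv hac₁ hpos
    (antitoneOn_ofReal_mul_one_sub_div_self hα.le) hrn hr.le (mem_Ioi.mpr hr) hrr'
  rw [← ENNReal.toReal_mul, ← ENNReal.toReal_mul]
  exact ENNReal.toReal_mono (by finiteness) key

/-- Part (1) of Lemma A.3: the ratio of CDFs `r ↦ G₁([0,r]) / G₂([0,r])` is
non-increasing where defined, in cross-multiplied form. -/
theorem bayes_cdf_ratio_monotone
    {α : ℝ} (hα : 0 < α)
    (G₁ G₂ : Measure ℝ) [IsProbabilityMeasure G₁] [IsProbabilityMeasure G₂]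
    (hsupp₁ : G₁ (Set.Ioo (0 : ℝ) 1)ᶜ = 0) (hsupp₂ : G₂ (Set.Ioo (0 : ℝ) 1)ᶜ = 0)
    (hac₁ : G₁ ≪ G₂) (hac₂ : G₂ ≪ G₁)
    (hrn : G₁.rnDeriv G₂ =ᵐ[G₂] fun r => ENNReal.ofReal (α * ((1 - r) / r))) :
    ∀ r r' : ℝ, 0 < r → r ≤ r' → r' < 1 → 0 < (G₂ (Set.Icc 0 r)).toReal →
      (G₁ (Set.Icc 0 r')).toReal * (G₂ (Set.Icc 0 r)).toReal ≤
        (G₁ (Set.Icc 0 r)).toReal * (G₂ (Set.Icc 0 r')).toReal :=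
  bayes_cdf_ratio_monotone_general hα G₁ G₂ hsupp₂ hac₁ hrn
end

section
/- Let α > 0 and let G₁, G₂ be Borel probability measures on ℝ supported on the open interval (0,1), mutually absolutely continuous, whose Radon–Nikodym derivative dG₁/dG₂ equals the function r ↦ α(1−r)/r, G₂-almost everywhere. Then G₁([0,r]) ≥ G₂([0,r]) for every r ∈ (0,1) (i.e., G₂ first-order stochastically dominates G₁); moreover, if G₁ ≠ G₂, then G₁([0,r]) > G₂([0,r]) for every r strictly between β̲ and β̄, where β̲ and β̄ denote the infimum and supremum of the common support of G₁ and G₂. -/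
open MeasureTheory

/-- The infimum of the (topological) support of a measure on `ℝ`. -/
noncomputable def suppInf (G : Measure ℝ) : ℝ := sInf {x : ℝ | G (Set.Iic x) ≠ 0}

/-- The supremum of the (topological) support of a measure on `ℝ`. -/
noncomputable def suppSup (G : Measure ℝ) : ℝ := sSup {x : ℝ | G (Set.Ici x) ≠ 0}

/-! The likelihood ratio `dG₁/dG₂ = α (1 - r) / r` is decreasing and crosses `1` at
`c = α / (1 + α)`. For `r < c` it exceeds `1` on `[0, r]`, so `G₁` charges `[0, r]` more than
`G₂` does; for `r ≥ c` it is below `1` on `(r, 1)`, so `G₁` charges `(r, 1)` less, and passing to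
complements uses that both are probability measures. Between `β̲` and `β̄` the relevant interval
has positive `G₂`-mass, which makes the inequality strict. -/

open Set Filter ENNReal

namespace MeasureTheory

section rnDeriv

variable {Ω : Type*} {m : MeasurableSpace Ω} {μ ν : Measure Ω} {s : Set Ω}

theorem measure_le_of_ae_one_le_rnDeriv (hs : MeasurableSet s)
    (h : ∀ᵐ x ∂μ, x ∈ s → 1 ≤ ν.rnDeriv μ x) : μ s ≤ ν s :=
  calc μ s = ∫⁻ _ in s, 1 ∂μ := (setLIntegral_one s).symm
    _ ≤ ∫⁻ x in s, ν.rnDeriv μ x ∂μ := setLIntegral_mono_ae' hs h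
    _ ≤ ν s := Measure.setLIntegral_rnDeriv_le s

theorem measure_lt_of_ae_one_lt_rnDeriv [IsFiniteMeasure μ] (hs : MeasurableSet s)
    (h : ∀ᵐ x ∂μ, x ∈ s → 1 < ν.rnDeriv μ x) (hμs : μ s ≠ 0) : μ s < ν s := by
  have h_restrict : ∀ᵐ x ∂μ.restrict s, 1 < ν.rnDeriv μ x := (ae_restrict_iff' hs).2 h
  have : (ae (μ.restrict s)).NeBot := ae_neBot.2 (by rwa [Ne, Measure.restrict_eq_zero])
  calc μ s = ∫⁻ _ in s, 1 ∂μ := (setLIntegral_one s).symm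
    _ < ∫⁻ x in s, ν.rnDeriv μ x ∂μ :=
      lintegral_strict_mono_of_ae_le_of_frequently_ae_lt
        (Measure.measurable_rnDeriv ν μ).aemeasurable (by simp [measure_ne_top])
        (h_restrict.mono fun _ hx => hx.le) (h_restrict.mono fun _ hx => hx.ne).frequently
    _ ≤ ν s := Measure.setLIntegral_rnDeriv_le s

theorem measure_le_of_ae_rnDeriv_le_one [ν.HaveLebesgueDecomposition μ] (hνμ : ν ≪ μ)
    (hs : MeasurableSet s) (h : ∀ᵐ x ∂μ, x ∈ s → ν.rnDeriv μ x ≤ 1) : ν s ≤ μ s :=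
  calc ν s = ∫⁻ x in s, ν.rnDeriv μ x ∂μ := (Measure.setLIntegral_rnDeriv' hνμ hs).symm
    _ ≤ ∫⁻ _ in s, 1 ∂μ := setLIntegral_mono_ae' hs h
    _ = μ s := setLIntegral_one s

theorem measure_lt_of_ae_rnDeriv_lt_one [IsFiniteMeasure μ] [IsFiniteMeasure ν]
    (hνμ : ν ≪ μ) (hs : MeasurableSet s) (h : ∀ᵐ x ∂μ, x ∈ s → ν.rnDeriv μ x < 1) (hμs : μ s ≠ 0) :
    ν s < μ s := by
  have h_restrict : ∀ᵐ x ∂μ.restrict s, ν.rnDeriv μ x < 1 := (ae_restrict_iff' hs).2 h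
  have : (ae (μ.restrict s)).NeBot := ae_neBot.2 (by rwa [Ne, Measure.restrict_eq_zero])
  calc ν s = ∫⁻ x in s, ν.rnDeriv μ x ∂μ := (Measure.setLIntegral_rnDeriv' hνμ hs).symm
    _ < ∫⁻ _ in s, 1 ∂μ :=
      lintegral_strict_mono_of_ae_le_of_frequently_ae_lt aemeasurable_const
        (by rw [Measure.setLIntegral_rnDeriv' hνμ hs]; exact measure_ne_top ν s)
        (h_restrict.mono fun _ hx => hx.le) (h_restrict.mono fun _ hx => hx.ne).frequently
    _ = μ s := setLIntegral_one s

end rnDeriv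

section SingleCrossing

variable {μ ν : Measure ℝ} [IsProbabilityMeasure μ] [IsProbabilityMeasure ν] {c : ℝ}

theorem measure_Iic_le_of_rnDeriv_crosses_one (hνμ : ν ≪ μ)
    (h_lt : ∀ᵐ x ∂μ, x < c → 1 < ν.rnDeriv μ x) (h_gt : ∀ᵐ x ∂μ, c < x → ν.rnDeriv μ x < 1)
    (r : ℝ) : μ (Iic r) ≤ ν (Iic r) := by
  rcases lt_or_ge r c with hrc | hcr
  · exact measure_le_of_ae_one_le_rnDeriv measurableSet_Iic
      (h_lt.mono fun x hx hxr => (hx (hxr.trans_lt hrc)).le)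
  · have hν_Ioi : ν (Ioi r) ≤ μ (Ioi r) :=
      measure_le_of_ae_rnDeriv_le_one hνμ measurableSet_Ioi
        (h_gt.mono fun x hx hxr => (hx (hcr.trans_lt hxr)).le)
    rw [← compl_Ioi, prob_compl_eq_one_sub (μ := ν) measurableSet_Ioi]
    exact prob_compl_le_one_sub_of_le_prob hν_Ioi measurableSet_Ioi

theorem measure_Iic_lt_of_rnDeriv_crosses_one (hνμ : ν ≪ μ)
    (h_lt : ∀ᵐ x ∂μ, x < c → 1 < ν.rnDeriv μ x) (h_gt : ∀ᵐ x ∂μ, c < x → ν.rnDeriv μ x < 1)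
    {r : ℝ} (h_Iic : μ (Iic r) ≠ 0) (h_Ioi : μ (Ioi r) ≠ 0) : μ (Iic r) < ν (Iic r) := by
  rcases lt_or_ge r c with hrc | hcr
  · exact measure_lt_of_ae_one_lt_rnDeriv measurableSet_Iic
      (h_lt.mono fun x hx hxr => hx (hxr.trans_lt hrc)) h_Iic
  · have hν_Ioi : ν (Ioi r) < μ (Ioi r) :=
      measure_lt_of_ae_rnDeriv_lt_one hνμ measurableSet_Ioi
        (h_gt.mono fun x hx hxr => hx (hcr.trans_lt hxr)) h_Ioi
    rw [← compl_Ioi, prob_compl_eq_one_sub (μ := ν) measurableSet_Ioi]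
    exact prob_compl_lt_one_sub_of_lt_prob hν_Ioi measurableSet_Ioi

end SingleCrossing

theorem measure_Icc_eq_measure_Iic {X : Type*} [MeasurableSpace X] [LinearOrder X]
    {μ : Measure X} {a b : X} (h : μ (Iio a) = 0) : μ (Icc a b) = μ (Iic b) :=
  le_antisymm (measure_mono Icc_subset_Iic_self) <|
    calc μ (Iic b) ≤ μ (Iio a ∪ Icc a b) := measure_mono Iic_subset_Iio_union_Icc
      _ ≤ μ (Iio a) + μ (Icc a b) := measure_union_le _ _
      _ = μ (Icc a b) := by rw [h, zero_add]

theorem measure_Iic_ne_zero_of_suppInf_lt {G : Measure ℝ} [NeZero G] {r : ℝ}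
    (h : suppInf G < r) : G (Iic r) ≠ 0 := by
  intro h0
  have h_nonempty : {x : ℝ | G (Iic x) ≠ 0}.Nonempty :=
    ((tendsto_measure_Iic_atTop G).eventually_ne
      (Measure.measure_univ_ne_zero.2 (NeZero.ne G))).exists
  refine h.not_ge (le_csInf h_nonempty fun x hx => ?_)
  by_contra! hxr
  exact hx (measure_mono_null (Iic_subset_Iic.2 hxr.le) h0)

theorem measure_Ioi_ne_zero_of_lt_suppSup {G : Measure ℝ} [NeZero G] {r : ℝ}
    (h : r < suppSup G) : G (Ioi r) ≠ 0 := by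
  intro h0
  have h_nonempty : {x : ℝ | G (Ici x) ≠ 0}.Nonempty :=
    ((tendsto_measure_Ici_atBot G).eventually_ne
      (Measure.measure_univ_ne_zero.2 (NeZero.ne G))).exists
  refine h.not_ge (csSup_le h_nonempty fun x hx => ?_)
  by_contra! hrx
  exact hx (measure_mono_null (Ici_subset_Ioi.2 hrx) h0)

end MeasureTheory

theorem one_lt_mul_one_sub_div {α x : ℝ} (hα : 0 < α) (hx : 0 < x) (h : x < α / (1 + α)) :
    1 < α * ((1 - x) / x) := by
  rw [lt_div_iff₀ (by positivity)] at h
  rw [mul_div_assoc', one_lt_div hx]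
  nlinarith

theorem mul_one_sub_div_lt_one {α x : ℝ} (hα : 0 < α) (h : α / (1 + α) < x) :
    α * ((1 - x) / x) < 1 := by
  have hx : 0 < x := lt_trans (by positivity) h
  rw [div_lt_iff₀ (by positivity)] at h
  rw [mul_div_assoc', div_lt_one hx]
  nlinarith

theorem bayes_fosd_general
    {α : ℝ} (hα : 0 < α)
    (G₁ G₂ : Measure ℝ) [IsProbabilityMeasure G₁] [IsProbabilityMeasure G₂]
    (hsupp₁ : G₁ (Set.Ioo (0 : ℝ) 1)ᶜ = 0) (hsupp₂ : G₂ (Set.Ioo (0 : ℝ) 1)ᶜ = 0)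
    (hac₁ : G₁ ≪ G₂)
    (hrn : G₁.rnDeriv G₂ =ᵐ[G₂] fun r => ENNReal.ofReal (α * ((1 - r) / r))) :
    (∀ r ∈ Set.Ioo (0 : ℝ) 1,
        (G₂ (Set.Icc 0 r)).toReal ≤ (G₁ (Set.Icc 0 r)).toReal) ∧
    (G₁ ≠ G₂ →
      ∀ r : ℝ, suppInf G₁ < r → r < suppSup G₁ →
        (G₂ (Set.Icc 0 r)).toReal < (G₁ (Set.Icc 0 r)).toReal) := by
  set c := α / (1 + α)
  have h_lt : ∀ᵐ x ∂G₂, x < c → 1 < G₁.rnDeriv G₂ x := by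
    filter_upwards [hrn, mem_ae_iff.2 hsupp₂] with x hx hx01 hxc
    rw [hx, one_lt_ofReal]
    exact one_lt_mul_one_sub_div hα hx01.1 hxc
  have h_gt : ∀ᵐ x ∂G₂, c < x → G₁.rnDeriv G₂ x < 1 := by
    filter_upwards [hrn] with x hx hcx
    rw [hx, ofReal_lt_one]
    exact mul_one_sub_div_lt_one hα hcx
  have h_Icc : ∀ G : Measure ℝ, G (Ioo 0 1)ᶜ = 0 → ∀ r, G (Icc 0 r) = G (Iic r) :=
    fun G hG _ => measure_Icc_eq_measure_Iic <|
      measure_mono_null (fun _ hx h => lt_asymm hx h.1 : Iio (0 : ℝ) ⊆ (Ioo 0 1)ᶜ) hG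
  simp only [h_Icc G₁ hsupp₁, h_Icc G₂ hsupp₂]
  refine ⟨fun r _ => toReal_mono (measure_ne_top _ _) ?_,
    fun _ r hr_inf hr_sup => toReal_strict_mono (measure_ne_top _ _) ?_⟩
  · exact measure_Iic_le_of_rnDeriv_crosses_one hac₁ h_lt h_gt r
  · exact measure_Iic_lt_of_rnDeriv_crosses_one hac₁ h_lt h_gt
      (mt (@hac₁ _) (measure_Iic_ne_zero_of_suppInf_lt hr_inf))
      (mt (@hac₁ _) (measure_Ioi_ne_zero_of_lt_suppSup hr_sup))

/-- Part (2) of Lemma A.3: `G₂` first-order stochastically dominates `G₁`,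
i.e. `G₁([0,r]) ≥ G₂([0,r])` for all `r ∈ (0,1)`; moreover, if `G₁ ≠ G₂` then the
inequality is strict for every `r` strictly between the infimum `β̲` and the
supremum `β̄` of the common support. -/
theorem bayes_fosd
    {α : ℝ} (hα : 0 < α)
    (G₁ G₂ : Measure ℝ) [IsProbabilityMeasure G₁] [IsProbabilityMeasure G₂]
    (hsupp₁ : G₁ (Set.Ioo (0 : ℝ) 1)ᶜ = 0) (hsupp₂ : G₂ (Set.Ioo (0 : ℝ) 1)ᶜ = 0)
    (hac₁ : G₁ ≪ G₂) (hac₂ : G₂ ≪ G₁)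
    (hrn : G₁.rnDeriv G₂ =ᵐ[G₂] fun r => ENNReal.ofReal (α * ((1 - r) / r))) :
    (∀ r ∈ Set.Ioo (0 : ℝ) 1,
        (G₂ (Set.Icc 0 r)).toReal ≤ (G₁ (Set.Icc 0 r)).toReal) ∧
    (G₁ ≠ G₂ →
      ∀ r : ℝ, suppInf G₁ < r → r < suppSup G₁ →
        (G₂ (Set.Icc 0 r)).toReal < (G₁ (Set.Icc 0 r)).toReal) :=
  bayes_fosd_general hα G₁ G₂ hsupp₁ hsupp₂ hac₁ hrn
end

section
/- Let α > 0 and let G₁, G₂ be Borel probability measures on ℝ supported on the open interval (0,1), mutually absolutely continuous, whose Radon–Nikodym derivative dG₁/dG₂ equals the function r ↦ α(1−r)/r, G₂-almost everywhere. If G₁ ≠ G₂, then the means satisfy ∫ r dG₁(r) < ∫ r dG₂(r). -/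
/-!
Let `d = dG₁/dG₂` and `t = α/(α+1)`, the point where `d(t) = 1`. Since `∫ d dG₂ = 1`, for every
constant `c` the difference of means is `∫ (r - c)(1 - d r) dG₂(r)`. With `c = t` the integrand
equals `(α+1)(r - t)²/r ≥ 0` on `(0,1)` and vanishes only where `d = 1`; as `G₁ ≠ G₂`, the set
`{d ≠ 1}` has positive `G₂`-measure, so the difference is positive.
-/

open MeasureTheory

namespace MeasureTheory

variable {Ω : Type*} [MeasurableSpace Ω] {μ ν : Measure Ω} [IsProbabilityMeasure μ]
  [IsProbabilityMeasure ν] {g : Ω → ℝ}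

theorem integrable_sub_mul_one_sub_toReal_rnDeriv (hμν : μ ≪ ν) (hgμ : Integrable g μ)
    (hgν : Integrable g ν) (c : ℝ) :
    Integrable (fun x ↦ (g x - c) * (1 - (μ.rnDeriv ν x).toReal)) ν := by
  have hfg := (integrable_toReal_rnDeriv_mul_iff hμν).2 (hgμ.sub (integrable_const c))
  refine ((hgν.sub (integrable_const c)).sub hfg).congr (ae_of_all _ fun x ↦ ?_)
  simp only [Pi.sub_apply]
  ring

theorem integral_sub_integral_eq_integral_mul_one_sub_toReal_rnDeriv (hμν : μ ≪ ν)
    (hgμ : Integrable g μ) (hgν : Integrable g ν) (c : ℝ) :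
    ∫ x, g x ∂ν - ∫ x, g x ∂μ = ∫ x, (g x - c) * (1 - (μ.rnDeriv ν x).toReal) ∂ν := by
  have hgcμ : Integrable (fun x ↦ g x - c) μ := hgμ.sub (integrable_const c)
  have hgcν : Integrable (fun x ↦ g x - c) ν := hgν.sub (integrable_const c)
  calc ∫ x, g x ∂ν - ∫ x, g x ∂μ = ∫ x, g x - c ∂ν - ∫ x, g x - c ∂μ := by
        rw [integral_sub hgν (integrable_const c), integral_sub hgμ (integrable_const c)]
        simp
    _ = ∫ x, g x - c ∂ν - ∫ x, (μ.rnDeriv ν x).toReal * (g x - c) ∂ν := by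
        rw [integral_toReal_rnDeriv_mul hμν]
    _ = ∫ x, (g x - c) * (1 - (μ.rnDeriv ν x).toReal) ∂ν := by
        rw [← integral_sub hgcν ((integrable_toReal_rnDeriv_mul_iff hμν).2 hgcμ)]
        congr 1 with x
        ring

theorem integral_lt_integral_of_rnDeriv_ne_one (hμν : μ ≪ ν) (hne : μ ≠ ν)
    (hgμ : Integrable g μ) (hgν : Integrable g ν) (c : ℝ)
    (hsign : ∀ᵐ x ∂ν, (μ.rnDeriv ν x).toReal ≠ 1 →
      0 < (g x - c) * (1 - (μ.rnDeriv ν x).toReal)) :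
    ∫ x, g x ∂μ < ∫ x, g x ∂ν := by
  set h : Ω → ℝ := fun x ↦ (g x - c) * (1 - (μ.rnDeriv ν x).toReal)
  have h_nonneg : 0 ≤ᵐ[ν] h := by
    filter_upwards [hsign] with x hx
    by_cases h1 : (μ.rnDeriv ν x).toReal = 1
    · simp [h, h1]
    · exact (hx h1).le
  have h_ne_one : ∃ᵐ x ∂ν, (μ.rnDeriv ν x).toReal ≠ 1 := by
    intro h_one
    refine hne ((Measure.rnDeriv_eq_one_iff_eq hμν).1 ?_)
    filter_upwards [h_one] with x hx
    exact (ENNReal.toReal_eq_one_iff _).1 (not_not.1 hx)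
  have h_support : 0 < ν (Function.support h) := by
    refine (pos_iff_ne_zero.2 (frequently_ae_iff.1 h_ne_one)).trans_le (measure_mono_ae ?_)
    filter_upwards [hsign] with x hx hx1
    exact (hx hx1).ne'
  rw [← sub_pos, integral_sub_integral_eq_integral_mul_one_sub_toReal_rnDeriv hμν hgμ hgν c]
  exact (integral_pos_iff_support_of_nonneg_ae h_nonneg
    (integrable_sub_mul_one_sub_toReal_rnDeriv hμν hgμ hgν c)).2 h_support

end MeasureTheory

theorem integrable_id_of_ae_mem_Ioo {μ : Measure ℝ} [IsFiniteMeasure μ] {a b : ℝ}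
    (h : ∀ᵐ r ∂μ, r ∈ Set.Ioo a b) : Integrable (fun r ↦ r) μ :=
  .of_bound measurable_id.aestronglyMeasurable (max |a| |b|) <| by
    filter_upwards [h] with r hr
    exact abs_le_max_abs_abs hr.1.le hr.2.le

theorem sub_mul_one_sub_likelihoodRatio_pos {α r : ℝ} (hα : 0 < α) (hr : 0 < r)
    (h : α * ((1 - r) / r) ≠ 1) : 0 < (r - α / (α + 1)) * (1 - α * ((1 - r) / r)) := by
  have h_ne : r - α / (α + 1) ≠ 0 := by
    contrapose! h
    rw [sub_eq_zero.1 h]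
    field_simp
    ring
  have h_eq : (r - α / (α + 1)) * (1 - α * ((1 - r) / r))
      = (α + 1) * (r - α / (α + 1)) ^ 2 / r := by
    field_simp
    ring
  rw [h_eq]
  positivity

theorem bayes_mean_strict_lt_general
    {α : ℝ} (hα : 0 < α)
    (G₁ G₂ : Measure ℝ) [IsProbabilityMeasure G₁] [IsProbabilityMeasure G₂]
    (hsupp₂ : G₂ (Set.Ioo (0 : ℝ) 1)ᶜ = 0)
    (hac₁ : G₁ ≪ G₂)
    (hrn : G₁.rnDeriv G₂ =ᵐ[G₂] fun r => ENNReal.ofReal (α * ((1 - r) / r)))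
    (hne : G₁ ≠ G₂) :
    (∫ r, r ∂G₁) < ∫ r, r ∂G₂ := by
  have h₂ : ∀ᵐ r ∂G₂, r ∈ Set.Ioo (0 : ℝ) 1 := ae_iff.2 hsupp₂
  refine integral_lt_integral_of_rnDeriv_ne_one hac₁ hne (integrable_id_of_ae_mem_Ioo
    (hac₁.ae_le h₂)) (integrable_id_of_ae_mem_Ioo h₂) (α / (α + 1)) ?_
  filter_upwards [hrn, h₂] with r hr ⟨hr₀, hr₁⟩
  rw [hr, ENNReal.toReal_ofReal
    (mul_nonneg hα.le (div_nonneg (sub_nonneg.2 hr₁.le) hr₀.le))]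
  exact sub_mul_one_sub_likelihoodRatio_pos hα hr₀

/-- Part (3) of Lemma A.3: if `dG₁/dG₂ (r) = α(1−r)/r` and `G₁ ≠ G₂`, then the
mean of `G₁` is strictly smaller than the mean of `G₂`. -/
theorem bayes_mean_strict_lt
    {α : ℝ} (hα : 0 < α)
    (G₁ G₂ : Measure ℝ) [IsProbabilityMeasure G₁] [IsProbabilityMeasure G₂]
    (hsupp₁ : G₁ (Set.Ioo (0 : ℝ) 1)ᶜ = 0) (hsupp₂ : G₂ (Set.Ioo (0 : ℝ) 1)ᶜ = 0)
    (hac₁ : G₁ ≪ G₂) (hac₂ : G₂ ≪ G₁)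
    (hrn : G₁.rnDeriv G₂ =ᵐ[G₂] fun r => ENNReal.ofReal (α * ((1 - r) / r)))
    (hne : G₁ ≠ G₂) :
    (∫ r, r ∂G₁) < ∫ r, r ∂G₂ :=
  bayes_mean_strict_lt_general hα G₁ G₂ hsupp₂ hac₁ hrn hne
end

section
/- Let α > 0 and δ > 0, and let G₁, G₂ be Borel probability measures on ℝ supported on the open interval (0,1), mutually absolutely continuous, whose Radon–Nikodym derivative dG₁/dG₂ equals the function r ↦ α(1−r)/r, G₂-almost everywhere. Suppose the total variation distance between G₁ and G₂, namely sup over Borel E ⊆ [0,1] of |G₁(E) − G₂(E)|, is at least δ. Let p = α/(1+α). Then there exists δ' > 0 such that β̲ + δ' < p < β̄ − δ' (where β̲, β̄ are the infimum and supremum of the common support of G₁ and G₂) and max{ G₁([0, p − δ']), 1 − G₂([0, p + δ']) } ≥ δ'. -/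
/-!
Write `p = α/(1+α)`; the likelihood ratio `α(1-r)/r` is `≤ 1` exactly for `r ≥ p`. If `G₁`
gave no mass to `(0,p)`, neither would `G₂`, so `dG₁/dG₂ ≤ 1` `G₂`-a.e. and the probability
measures would coincide, contradicting `tvDist G₁ G₂ ≥ δ > 0`; symmetrically `G₁` charges `(p,1)`.
By countable additivity `G₁` then charges some `(0,c₁]` with `c₁ < p` and some `[c₂,1)` with
`c₂ > p`, and any `δ'` below `p - c₁`, `c₂ - p` and `G₁ (0,c₁]` works.
-/

open MeasureTheory

/-- The total variation distance between two measures on `ℝ`, as the supremum over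
Borel subsets of `[0,1]` of the absolute difference of the measures. -/
noncomputable def tvDist (G₁ G₂ : Measure ℝ) : ℝ :=
  sSup {d : ℝ | ∃ E : Set ℝ, MeasurableSet E ∧ E ⊆ Set.Icc (0 : ℝ) 1 ∧
    d = |(G₁ E).toReal - (G₂ E).toReal|}

open Set

lemma tvDist_self (G : Measure ℝ) : tvDist G G = 0 := by
  have hset : {d : ℝ | ∃ E : Set ℝ, MeasurableSet E ∧ E ⊆ Icc (0 : ℝ) 1 ∧
      d = |(G E).toReal - (G E).toReal|} = {0} := by
    ext d
    simp only [sub_self, abs_zero, mem_ofPred_eq, mem_singleton_iff]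
    exact ⟨fun ⟨_, _, _, hd⟩ => hd, fun hd => ⟨∅, MeasurableSet.empty, empty_subset _, hd⟩⟩
  rw [tvDist, hset, csSup_singleton]

namespace MeasureTheory.Measure

variable {Ω : Type*} [MeasurableSpace Ω] {μ ν : Measure Ω}
  [IsProbabilityMeasure μ] [IsProbabilityMeasure ν]

lemma eq_of_rnDeriv_le_one (hμν : μ ≪ ν) (h : ∀ᵐ x ∂ν, μ.rnDeriv ν x ≤ 1) : μ = ν := by
  refine eq_of_le_of_isProbabilityMeasure ?_
  calc μ = ν.withDensity (μ.rnDeriv ν) := (withDensity_rnDeriv_eq μ ν hμν).symm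
    _ ≤ ν.withDensity 1 := withDensity_mono h
    _ = ν := withDensity_one

lemma eq_of_one_le_rnDeriv (hμν : μ ≪ ν) (h : ∀ᵐ x ∂ν, 1 ≤ μ.rnDeriv ν x) : μ = ν := by
  refine (eq_of_le_of_isProbabilityMeasure ?_).symm
  calc ν = ν.withDensity 1 := withDensity_one.symm
    _ ≤ ν.withDensity (μ.rnDeriv ν) := withDensity_mono h
    _ = μ := withDensity_rnDeriv_eq μ ν hμν

end MeasureTheory.Measure

lemma exists_lt_measure_Ioc_ne_zero {μ : Measure ℝ} {a b : ℝ} (h : μ (Ioo a b) ≠ 0) :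
    ∃ c < b, μ (Ioc a c) ≠ 0 := by
  by_contra! hc
  refine h (measure_mono_null (fun x hx => ?_) (measure_iUnion_null fun n : ℕ =>
    hc (b - 1 / (n + 1)) (sub_lt_self b Nat.one_div_pos_of_nat)))
  obtain ⟨n, hn⟩ := exists_nat_one_div_lt (sub_pos.2 hx.2)
  exact mem_iUnion.2 ⟨n, hx.1, by linarith⟩

lemma exists_gt_measure_Ico_ne_zero {μ : Measure ℝ} {a b : ℝ} (h : μ (Ioo a b) ≠ 0) :
    ∃ c > a, μ (Ico c b) ≠ 0 := by
  by_contra! hc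
  refine h (measure_mono_null (fun x hx => ?_) (measure_iUnion_null fun n : ℕ =>
    hc (a + 1 / (n + 1)) (lt_add_of_pos_right a Nat.one_div_pos_of_nat)))
  obtain ⟨n, hn⟩ := exists_nat_one_div_lt (sub_pos.2 hx.1)
  exact mem_iUnion.2 ⟨n, by linarith, hx.2⟩

lemma suppInf_le {μ : Measure ℝ} {a x : ℝ} (ha : μ (Iio a) = 0) (hx : μ (Iic x) ≠ 0) :
    suppInf μ ≤ x := by
  refine csInf_le ⟨a, fun y hy => ?_⟩ hx
  by_contra! hya
  exact hy (measure_mono_null (Iic_subset_Iio.2 hya) ha)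

lemma le_suppSup {μ : Measure ℝ} {b x : ℝ} (hb : μ (Ioi b) = 0) (hx : μ (Ici x) ≠ 0) :
    x ≤ suppSup μ := by
  refine le_csSup ⟨b, fun y hy => ?_⟩ hx
  by_contra! hby
  exact hy (measure_mono_null (Ici_subset_Ioi.2 hby) hb)

section Odds

variable {α x : ℝ}

lemma mul_odds_le_one_iff (hα : 0 < α) (hx : 0 < x) :
    α * ((1 - x) / x) ≤ 1 ↔ α / (1 + α) ≤ x := by
  rw [mul_div_assoc', div_le_one hx, div_le_iff₀ (by linarith)]
  constructor <;> intro h <;> linarith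

lemma one_le_mul_odds_iff (hα : 0 < α) (hx : 0 < x) :
    1 ≤ α * ((1 - x) / x) ↔ x ≤ α / (1 + α) := by
  rw [mul_div_assoc', one_le_div hx, le_div_iff₀ (by linarith)]
  constructor <;> intro h <;> linarith

end Odds

section Posterior

variable {α : ℝ} {G₁ G₂ : Measure ℝ} [IsProbabilityMeasure G₁] [IsProbabilityMeasure G₂]

lemma measure_Ioo_zero_ne_zero_of_ne (hα : 0 < α) (hsupp₂ : G₂ (Ioo (0 : ℝ) 1)ᶜ = 0)
    (hac₁ : G₁ ≪ G₂) (hac₂ : G₂ ≪ G₁)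
    (hrn : G₁.rnDeriv G₂ =ᵐ[G₂] fun r => ENNReal.ofReal (α * ((1 - r) / r)))
    (hne : G₁ ≠ G₂) : G₁ (Ioo 0 (α / (1 + α))) ≠ 0 := by
  intro h0
  refine hne (Measure.eq_of_rnDeriv_le_one hac₁ ?_)
  filter_upwards [measure_eq_zero_iff_ae_notMem.1 hsupp₂,
    measure_eq_zero_iff_ae_notMem.1 (hac₂ h0), hrn] with x hx hxp hxr
  rw [mem_compl_iff, not_not] at hx
  rw [hxr, ENNReal.ofReal_le_one, mul_odds_le_one_iff hα hx.1]
  exact not_lt.1 fun hlt => hxp ⟨hx.1, hlt⟩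

lemma measure_Ioo_one_ne_zero_of_ne (hα : 0 < α) (hsupp₂ : G₂ (Ioo (0 : ℝ) 1)ᶜ = 0)
    (hac₁ : G₁ ≪ G₂) (hac₂ : G₂ ≪ G₁)
    (hrn : G₁.rnDeriv G₂ =ᵐ[G₂] fun r => ENNReal.ofReal (α * ((1 - r) / r)))
    (hne : G₁ ≠ G₂) : G₁ (Ioo (α / (1 + α)) 1) ≠ 0 := by
  intro h0
  refine hne (Measure.eq_of_one_le_rnDeriv hac₁ ?_)
  filter_upwards [measure_eq_zero_iff_ae_notMem.1 hsupp₂,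
    measure_eq_zero_iff_ae_notMem.1 (hac₂ h0), hrn] with x hx hxp hxr
  rw [mem_compl_iff, not_not] at hx
  rw [hxr, ENNReal.one_le_ofReal, one_le_mul_odds_iff hα hx.1]
  exact not_lt.1 fun hlt => hxp ⟨hlt, hx.2⟩

end Posterior

/-- The Claim in the proof of Lemma A.4: if the total variation distance between
`G₁` and `G₂` is at least `δ`, then there is `δ' > 0` with
`β̲ + δ' < p < β̄ − δ'` and `max{G₁([0, p−δ']), 1 − G₂([0, p+δ'])} ≥ δ'`,
where `p = α/(1+α)`. -/
theorem bayes_tv_claim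
    {α δ : ℝ} (hα : 0 < α) (hδ : 0 < δ)
    (G₁ G₂ : Measure ℝ) [IsProbabilityMeasure G₁] [IsProbabilityMeasure G₂]
    (hsupp₁ : G₁ (Set.Ioo (0 : ℝ) 1)ᶜ = 0) (hsupp₂ : G₂ (Set.Ioo (0 : ℝ) 1)ᶜ = 0)
    (hac₁ : G₁ ≪ G₂) (hac₂ : G₂ ≪ G₁)
    (hrn : G₁.rnDeriv G₂ =ᵐ[G₂] fun r => ENNReal.ofReal (α * ((1 - r) / r)))
    (htv : δ ≤ tvDist G₁ G₂) :
    ∃ δ' > 0,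
      suppInf G₁ + δ' < α / (1 + α) ∧ α / (1 + α) < suppSup G₁ - δ' ∧
      δ' ≤ max (G₁ (Set.Icc 0 (α / (1 + α) - δ'))).toReal
              (1 - (G₂ (Set.Icc 0 (α / (1 + α) + δ'))).toReal) := by
  set p := α / (1 + α)
  have hne : G₁ ≠ G₂ := by
    rintro rfl
    linarith [tvDist_self G₁]
  obtain ⟨c₁, hc₁p, hc₁⟩ : ∃ c < p, G₁ (Ioc 0 c) ≠ 0 := exists_lt_measure_Ioc_ne_zero
    (measure_Ioo_zero_ne_zero_of_ne hα hsupp₂ hac₁ hac₂ hrn hne)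
  obtain ⟨c₂, hc₂p, hc₂⟩ : ∃ c > p, G₁ (Ico c 1) ≠ 0 := exists_gt_measure_Ico_ne_zero
    (measure_Ioo_one_ne_zero_of_ne hα hsupp₂ hac₁ hac₂ hrn hne)
  have hneg : G₁ (Iio 0) = 0 := by
    refine measure_mono_null ?_ hsupp₁
    intro x hx h
    exact lt_asymm hx h.1
  have hgt_one : G₁ (Ioi 1) = 0 := by
    refine measure_mono_null ?_ hsupp₁
    intro x hx h
    exact lt_asymm hx h.2
  have hinf : suppInf G₁ ≤ c₁ :=
    suppInf_le hneg fun h => hc₁ (measure_mono_null Ioc_subset_Iic_self h)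
  have hsup : c₂ ≤ suppSup G₁ :=
    le_suppSup hgt_one fun h => hc₂ (measure_mono_null Ico_subset_Ici_self h)
  set m := (G₁ (Ioc 0 c₁)).toReal
  have hm : 0 < m := ENNReal.toReal_pos hc₁ (measure_ne_top _ _)
  obtain ⟨δ', hδ'pos, hδ'⟩ :=
    exists_between (lt_min (lt_min (sub_pos.2 hc₁p) (sub_pos.2 hc₂p)) hm)
  rw [lt_min_iff, lt_min_iff] at hδ'
  refine ⟨δ', hδ'pos, by linarith, by linarith, le_max_of_le_left (hδ'.2.le.trans ?_)⟩
  exact ENNReal.toReal_mono (measure_ne_top _ _)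
    (measure_mono (Ioc_subset_Icc_self.trans (Icc_subset_Icc_right (by linarith))))
end

section
/- Let α > 0 and δ > 0. There exists ε > 0, depending only on α and δ, such that the following holds: for every pair G₁, G₂ of Borel probability measures on ℝ supported on the open interval (0,1), mutually absolutely continuous, whose Radon–Nikodym derivative dG₁/dG₂ equals the function r ↦ α(1−r)/r G₂-almost everywhere, and whose total variation distance sup_{E Borel} |G₁(E) − G₂(E)| is at least δ, one has ∫ r dG₂(r) − ∫ r dG₁(r) ≥ ε. -/
/-!
Write `L r = α (1 - r) / r` for the density `dG₁/dG₂`. Since `∫ L dG₂ = 1`, also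
`∫ r⁻¹ dG₂ = (1 + α) / α`, and the pointwise identity
`r (L - 1)² = α (L - 1) + (1 + α) (r - r L)` turns `∫ r (L - 1)² dG₂` into `1 + α` times the gap
of the means. The total variation distance is at most `½ ∫ |L - 1| dG₂`, and Cauchy–Schwarz
with the weights `r` and `r⁻¹` gives `(∫ |L - 1| dG₂)² ≤ ∫ r (L - 1)² dG₂ · ∫ r⁻¹ dG₂`,
so the gap is at least `4αδ² / (1 + α)²`.
-/

open MeasureTheory

open Set

theorem abs_setIntegral_le_half_integral_abs {X : Type*} [MeasurableSpace X] {μ : Measure X}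
    {f : X → ℝ} (hf : Integrable f μ) (hf₀ : ∫ x, f x ∂μ = 0) {s : Set X}
    (hs : MeasurableSet s) :
    |∫ x in s, f x ∂μ| ≤ (∫ x, |f x| ∂μ) / 2 := by
  have hsplit := integral_add_compl hs hf
  have habs_split := integral_add_compl hs hf.abs
  have hs_le := abs_integral_le_integral_abs (f := f) (μ := μ.restrict s)
  have hsc_le := abs_integral_le_integral_abs (f := f) (μ := μ.restrict sᶜ)
  rw [show ∫ x in sᶜ, f x ∂μ = -∫ x in s, f x ∂μ by linarith, abs_neg] at hsc_le
  linarith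

theorem abs_measureReal_sub_le_half_integral_abs_rnDeriv {X : Type*} [MeasurableSpace X]
    {μ ν : Measure X} [IsFiniteMeasure μ] [IsFiniteMeasure ν] (hμν : μ ≪ ν)
    (huniv : μ univ = ν univ) {s : Set X} (hs : MeasurableSet s) :
    |μ.real s - ν.real s| ≤ (∫ x, |(μ.rnDeriv ν x).toReal - 1| ∂ν) / 2 := by
  have hint : Integrable (fun x => (μ.rnDeriv ν x).toReal - 1) ν :=
    Measure.integrable_toReal_rnDeriv.sub (integrable_const 1)
  have hzero : ∫ x, ((μ.rnDeriv ν x).toReal - 1) ∂ν = 0 := by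
    rw [integral_sub Measure.integrable_toReal_rnDeriv (integrable_const 1),
      Measure.integral_toReal_rnDeriv hμν, integral_const, measureReal_def, measureReal_def,
      huniv]
    simp
  have hset : ∫ x in s, ((μ.rnDeriv ν x).toReal - 1) ∂ν = μ.real s - ν.real s := by
    rw [integral_sub Measure.integrable_toReal_rnDeriv.integrableOn (integrable_const 1),
      Measure.setIntegral_toReal_rnDeriv hμν, setIntegral_const, smul_eq_mul, mul_one]
  rw [← hset]
  exact abs_setIntegral_le_half_integral_abs hint hzero hs

theorem tvDist_le_half_integral_abs_rnDeriv {G₁ G₂ : Measure ℝ} [IsProbabilityMeasure G₁]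
    [IsProbabilityMeasure G₂] (hG : G₁ ≪ G₂) :
    tvDist G₁ G₂ ≤ (∫ r, |(G₁.rnDeriv G₂ r).toReal - 1| ∂G₂) / 2 := by
  refine Real.sSup_le ?_ (by positivity)
  rintro d ⟨E, hE, -, rfl⟩
  exact abs_measureReal_sub_le_half_integral_abs_rnDeriv hG (by simp) hE

theorem sq_integral_abs_le_integral_mul_sq_mul_integral_inv {X : Type*} [MeasurableSpace X]
    {μ : Measure X} {f w : X → ℝ} (hw : ∀ᵐ x ∂μ, 0 < w x) (hf : Integrable f μ)
    (hwf : Integrable (fun x => w x * f x ^ 2) μ) (hw' : Integrable (fun x => (w x)⁻¹) μ) :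
    (∫ x, |f x| ∂μ) ^ 2 ≤ (∫ x, w x * f x ^ 2 ∂μ) * ∫ x, (w x)⁻¹ ∂μ := by
  have hquad : ∀ t : ℝ, 0 ≤ (∫ x, (w x)⁻¹ ∂μ) * (t * t) + (-2 * ∫ x, |f x| ∂μ) * t
      + ∫ x, w x * f x ^ 2 ∂μ := by
    intro t
    have hpt : ∀ᵐ x ∂μ, 0 ≤ (w x)⁻¹ * (t * t) + -2 * |f x| * t + w x * f x ^ 2 := by
      filter_upwards [hw] with x hx
      have : (w x)⁻¹ * (t * t) + -2 * |f x| * t + w x * f x ^ 2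
          = (w x)⁻¹ * (t - w x * |f x|) ^ 2 := by
        rw [← sq_abs (f x)]; field_simp; ring
      rw [this]; positivity
    have hint_abs : Integrable (fun x => -2 * |f x| * t) μ := (hf.abs.const_mul _).mul_const _
    have hint_lin : Integrable (fun x => (w x)⁻¹ * (t * t) + -2 * |f x| * t) μ :=
      (hw'.mul_const _).add hint_abs
    calc 0 ≤ _ := integral_nonneg_of_ae hpt
      _ = _ := by
        rw [integral_add hint_lin hwf,
          integral_add (hw'.mul_const _) hint_abs, integral_mul_const, integral_mul_const,
          integral_const_mul]
  have := discrim_le_zero hquad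
  rw [discrim] at this
  nlinarith

theorem integrable_id_of_ae_mem_Ioo_s9 {ν : Measure ℝ} [IsFiniteMeasure ν]
    (hν : ∀ᵐ r ∂ν, r ∈ Ioo 0 1) : Integrable (fun r => r) ν :=
  Integrable.of_mem_Icc 0 1 aemeasurable_id (hν.mono fun _ hr => Ioo_subset_Icc_self hr)

noncomputable def likelihoodRatio (α r : ℝ) : ℝ := α * ((1 - r) / r)

section likelihoodRatio

variable {α r : ℝ}

theorem likelihoodRatio_nonneg (hα : 0 ≤ α) (hr : r ∈ Ioo 0 1) : 0 ≤ likelihoodRatio α r :=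
  mul_nonneg hα (div_nonneg (by linarith [hr.2]) hr.1.le)

theorem inv_eq_likelihoodRatio_add (hα : α ≠ 0) (hr : r ≠ 0) :
    r⁻¹ = (likelihoodRatio α r + α) / α := by
  unfold likelihoodRatio; field_simp; ring

theorem likelihoodRatio_mul_self (hr : r ≠ 0) : likelihoodRatio α r * r = α * (1 - r) := by
  unfold likelihoodRatio; field_simp

theorem mul_likelihoodRatio_sub_one_sq (hr : r ≠ 0) :
    r * (likelihoodRatio α r - 1) ^ 2
      = α * (likelihoodRatio α r - 1) + (1 + α) * (r - likelihoodRatio α r * r) := by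
  unfold likelihoodRatio; field_simp; ring

variable {ν : Measure ℝ}

theorem integrable_inv_of_integrable_likelihoodRatio [IsFiniteMeasure ν] (hα : α ≠ 0)
    (hν : ∀ᵐ r ∂ν, r ≠ 0)
    (hL : Integrable (likelihoodRatio α) ν) : Integrable (fun r => r⁻¹) ν :=
  ((hL.add (integrable_const α)).div_const α).congr <|
    hν.mono fun _ hr => (inv_eq_likelihoodRatio_add hα hr).symm

theorem integral_inv_of_integral_likelihoodRatio [IsProbabilityMeasure ν]
    (hα : α ≠ 0) (hν : ∀ᵐ r ∂ν, r ≠ 0)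
    (hL : Integrable (likelihoodRatio α) ν) (hL₁ : ∫ r, likelihoodRatio α r ∂ν = 1) :
    ∫ r, r⁻¹ ∂ν = (1 + α) / α := by
  rw [integral_congr_ae (hν.mono fun _ hr => inv_eq_likelihoodRatio_add hα hr), integral_div,
    integral_add hL (integrable_const α), hL₁, integral_const, probReal_univ, one_smul]

theorem integrable_likelihoodRatio_mul_self [IsFiniteMeasure ν]
    (hν : ∀ᵐ r ∂ν, r ∈ Ioo 0 1) :
    Integrable (fun r => likelihoodRatio α r * r) ν :=
  (((integrable_const 1).sub (integrable_id_of_ae_mem_Ioo_s9 hν)).const_mul α).congr <|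
    hν.mono fun _ hr => (likelihoodRatio_mul_self hr.1.ne').symm

theorem integrable_mul_likelihoodRatio_sub_one_sq [IsFiniteMeasure ν]
    (hν : ∀ᵐ r ∂ν, r ∈ Ioo 0 1) (hL : Integrable (likelihoodRatio α) ν) :
    Integrable (fun r => r * (likelihoodRatio α r - 1) ^ 2) ν :=
  (((hL.sub (integrable_const 1)).const_mul α).add (((integrable_id_of_ae_mem_Ioo_s9 hν).sub
    (integrable_likelihoodRatio_mul_self hν)).const_mul (1 + α))).congr <|
    hν.mono fun _ hr => (mul_likelihoodRatio_sub_one_sq hr.1.ne').symm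

theorem integral_mul_likelihoodRatio_sub_one_sq [IsProbabilityMeasure ν]
    (hν : ∀ᵐ r ∂ν, r ∈ Ioo 0 1)
    (hL : Integrable (likelihoodRatio α) ν) (hL₁ : ∫ r, likelihoodRatio α r ∂ν = 1) :
    ∫ r, r * (likelihoodRatio α r - 1) ^ 2 ∂ν
      = (1 + α) * ((∫ r, r ∂ν) - ∫ r, likelihoodRatio α r * r ∂ν) := by
  have hid := integrable_id_of_ae_mem_Ioo_s9 hν
  have hLr := integrable_likelihoodRatio_mul_self (α := α) hν
  have hL' : Integrable (fun r => α * (likelihoodRatio α r - 1)) ν :=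
    (hL.sub (integrable_const 1)).const_mul α
  have hid' : Integrable (fun r => (1 + α) * (r - likelihoodRatio α r * r)) ν :=
    (hid.sub hLr).const_mul (1 + α)
  rw [integral_congr_ae (hν.mono fun _ hr => mul_likelihoodRatio_sub_one_sq hr.1.ne'),
    integral_add hL' hid', integral_const_mul, integral_const_mul,
    integral_sub hL (integrable_const 1), hL₁, integral_sub hid hLr]
  simp

theorem mul_sq_integral_abs_likelihoodRatio_sub_one_le [IsProbabilityMeasure ν]
    (hα : 0 < α) (hν : ∀ᵐ r ∂ν, r ∈ Ioo 0 1)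
    (hL : Integrable (likelihoodRatio α) ν) (hL₁ : ∫ r, likelihoodRatio α r ∂ν = 1) :
    α * (∫ r, |likelihoodRatio α r - 1| ∂ν) ^ 2
      ≤ (1 + α) ^ 2 * ((∫ r, r ∂ν) - ∫ r, likelihoodRatio α r * r ∂ν) := by
  have hν₀ : ∀ᵐ r ∂ν, r ≠ 0 := hν.mono fun _ hr => hr.1.ne'
  have hCS := sq_integral_abs_le_integral_mul_sq_mul_integral_inv
    (f := fun r => likelihoodRatio α r - 1) (w := fun r => r) (hν.mono fun _ hr => hr.1)
    (hL.sub (integrable_const 1)) (integrable_mul_likelihoodRatio_sub_one_sq hν hL)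
    (integrable_inv_of_integrable_likelihoodRatio hα.ne' hν₀ hL)
  rw [integral_mul_likelihoodRatio_sub_one_sq hν hL hL₁,
    integral_inv_of_integral_likelihoodRatio hα.ne' hν₀ hL hL₁] at hCS
  have := mul_le_mul_of_nonneg_left hCS hα.le
  field_simp at this
  linarith

end likelihoodRatio

/-- Lemma A.4: for every `α > 0` and `δ > 0` there is `ε > 0`, depending only on
`α` and `δ`, such that for every pair of belief distributions `G₁, G₂` satisfying
Bayes' rule with prior odds `α` and total variation distance at least `δ`, the
means are separated by at least `ε`. -/
theorem bayes_uniform_mean_gap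
    {α δ : ℝ} (hα : 0 < α) (hδ : 0 < δ) :
    ∃ ε > 0, ∀ G₁ G₂ : Measure ℝ,
      IsProbabilityMeasure G₁ → IsProbabilityMeasure G₂ →
      G₁ (Set.Ioo (0 : ℝ) 1)ᶜ = 0 → G₂ (Set.Ioo (0 : ℝ) 1)ᶜ = 0 →
      G₁ ≪ G₂ → G₂ ≪ G₁ →
      (G₁.rnDeriv G₂ =ᵐ[G₂] fun r => ENNReal.ofReal (α * ((1 - r) / r))) →
      δ ≤ tvDist G₁ G₂ →
      ε ≤ (∫ r, r ∂G₂) - ∫ r, r ∂G₁ := by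
  refine ⟨4 * α * δ ^ 2 / (1 + α) ^ 2, by positivity, ?_⟩
  intro G₁ G₂ _ _ _ hG₂ hG₁₂ _ hrn htv
  have hsupp : ∀ᵐ r ∂G₂, r ∈ Ioo 0 1 := ae_iff.mpr hG₂
  have hρ : (fun r => (G₁.rnDeriv G₂ r).toReal) =ᵐ[G₂] likelihoodRatio α := by
    filter_upwards [hrn, hsupp] with r hr hr₀₁
    rw [hr]
    exact ENNReal.toReal_ofReal (likelihoodRatio_nonneg hα.le hr₀₁)
  have hL : Integrable (likelihoodRatio α) G₂ := Measure.integrable_toReal_rnDeriv.congr hρ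
  have hL₁ : ∫ r, likelihoodRatio α r ∂G₂ = 1 := by
    rw [← integral_congr_ae hρ, Measure.integral_toReal_rnDeriv hG₁₂, probReal_univ]
  have hmean : ∫ r, r ∂G₁ = ∫ r, likelihoodRatio α r * r ∂G₂ := by
    rw [← integral_toReal_rnDeriv_mul hG₁₂]
    exact integral_congr_ae (hρ.mul (ae_eq_refl _))
  have hA : 2 * δ ≤ ∫ r, |likelihoodRatio α r - 1| ∂G₂ := by
    have hρ' : ∫ r, |(G₁.rnDeriv G₂ r).toReal - 1| ∂G₂
        = ∫ r, |likelihoodRatio α r - 1| ∂G₂ :=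
      integral_congr_ae (hρ.fun_comp fun x => |x - 1|)
    linarith [htv.trans (tvDist_le_half_integral_abs_rnDeriv hG₁₂)]
  rw [div_le_iff₀ (by positivity)]
  calc 4 * α * δ ^ 2 = α * (2 * δ) ^ 2 := by ring
    _ ≤ α * (∫ r, |likelihoodRatio α r - 1| ∂G₂) ^ 2 := by gcongr
    _ ≤ _ := mul_sq_integral_abs_likelihoodRatio_sub_one_le hα hsupp hL hL₁
    _ = _ := by rw [hmean, mul_comm]
end

section
/- Let S be a finite nonempty set, let L ≥ 2 be a natural number, and let p₁, …, p_L : S → ℝ be pairwise distinct probability mass functions on S (each pᵢ is nonnegative and sums to 1). For each i define qᵢ : S^{L−1} → ℝ by qᵢ(s₁, …, s_{L−1}) = ∏_{k=1}^{L−1} pᵢ(s_k). Then the functions q₁, …, q_L are linearly independent in the real vector space of functions from S^{L−1} to ℝ. -/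
/-- The dot-product linear functional `f ↦ ∑ s, v s * f s`. -/
noncomputable def dotFunctional {S : Type*} [Fintype S] (v : S → ℝ) : (S → ℝ) →ₗ[ℝ] ℝ where
  toFun f := ∑ s, v s * f s
  map_add' f g := by simp [mul_add, Finset.sum_add_distrib]
  map_smul' a f := by
    simp [Finset.mul_sum, mul_comm, mul_left_comm]

lemma card_filter_val_lt (n m : ℕ) (h : m ≤ n) :
    (Finset.univ.filter (fun j : Fin n => (j : ℕ) < m)).card = m := by
  have : (Finset.univ.filter (fun j : Fin n => (j : ℕ) < m)) =
      (Finset.range m).attachFin (fun a ha => lt_of_lt_of_le (Finset.mem_range.mp ha) h) := by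
    ext j; simp [Finset.mem_attachFin]
  rw [this, Finset.card_attachFin, Finset.card_range]

/-- Tensor powers of distinct probability mass functions are linearly independent:
if `p 1, …, p L` are pairwise distinct pmfs on a finite set `S`, then their
`(L−1)`-fold tensor powers `q i (s₁,…,s_{L−1}) = ∏ k, p i (s k)` are linearly
independent in the space of functions `S^{L−1} → ℝ`. -/
theorem tensor_powers_linearIndependent
    {S : Type*} [Fintype S] [Nonempty S] {L : ℕ} (hL : 2 ≤ L)
    (p : Fin L → S → ℝ)
    (hnonneg : ∀ i s, 0 ≤ p i s)
    (hsum : ∀ i, ∑ s, p i s = 1)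
    (hdistinct : Function.Injective p) :
    LinearIndependent ℝ
      (fun i : Fin L => fun s : Fin (L - 1) → S => ∏ k, p i (s k)) := by
  classical
  rw [Fintype.linearIndependent_iff]
  intro c hc
  -- Step 1: find a separating functional `f`.
  set ι := {x : Fin L × Fin L // x.1 ≠ x.2}
  have hker : ∀ x : ι, LinearMap.ker (dotFunctional (p x.1.1 - p x.1.2)) ≠ ⊤ := by
    intro x
    have hne : p x.1.1 - p x.1.2 ≠ 0 := sub_ne_zero.mpr (fun h => x.2 (hdistinct h))
    obtain ⟨s, hs⟩ := Function.ne_iff.mp (fun h => hne (funext fun a => by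
      simpa [sub_eq_zero] using congrFun h a))
    intro htop
    have h0 : dotFunctional (p x.1.1 - p x.1.2) (Pi.single s 1) = 0 := by
      rw [← LinearMap.mem_ker, htop]; trivial
    simp only [dotFunctional, LinearMap.coe_mk, AddHom.coe_mk, Pi.single_apply,
      mul_ite, mul_one, mul_zero, Finset.sum_ite_eq', Finset.mem_univ, if_true] at h0
    exact hs (by simpa [sub_eq_zero, Pi.sub_apply] using h0)
  have hcover : (⋃ x : ι, ((LinearMap.ker (dotFunctional (p x.1.1 - p x.1.2)) :
      Submodule ℝ (S → ℝ)) : Set (S → ℝ))) ≠ Set.univ := by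
    intro h
    obtain ⟨x, hx⟩ := Subspace.exists_eq_top_of_iUnion_eq_univ h
    exact hker x hx
  obtain ⟨f, hf⟩ : ∃ f : S → ℝ,
      ∀ x : ι, f ∉ (LinearMap.ker (dotFunctional (p x.1.1 - p x.1.2)) : Set (S → ℝ)) := by
    rcases Set.ne_univ_iff_exists_notMem _ |>.mp hcover with ⟨f, hf⟩
    exact ⟨f, fun x hx => hf (Set.mem_iUnion.mpr ⟨x, hx⟩)⟩
  set t : Fin L → ℝ := fun i => ∑ s, p i s * f s with ht
  have htinj : Function.Injective t := by
    intro i j hij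
    by_contra hne
    apply hf ⟨(i, j), hne⟩
    simp only [SetLike.mem_coe, LinearMap.mem_ker]
    show dotFunctional (p i - p j) f = 0
    simp only [dotFunctional, LinearMap.coe_mk, AddHom.coe_mk, Pi.sub_apply, sub_mul,
      Finset.sum_sub_distrib]
    exact sub_eq_zero.mpr hij
  -- Step 2: power sums vanish
  have hpow : ∀ k : Fin L, ∑ i, c i * t i ^ (k : ℕ) = 0 := by
    intro k
    have key : ∀ i : Fin L,
        (∑ s : Fin (L-1) → S, (∏ j : Fin (L-1), p i (s j)) *
          ∏ j : Fin (L-1), (if (j:ℕ) < (k:ℕ) then f (s j) else 1))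
          = t i ^ (k : ℕ) := by
      intro i
      have hsplit : ∀ s : Fin (L-1) → S,
          (∏ j : Fin (L-1), p i (s j)) * ∏ j : Fin (L-1), (if (j:ℕ) < (k:ℕ) then f (s j) else 1)
          = ∏ j : Fin (L-1), (p i (s j) * (if (j:ℕ) < (k:ℕ) then f (s j) else 1)) := by
        intro s; rw [← Finset.prod_mul_distrib]
      simp_rw [hsplit]
      rw [← Fintype.prod_sum (fun (j : Fin (L-1)) (a : S) =>
        p i a * (if (j:ℕ) < (k:ℕ) then f a else 1))]
      have hfac : ∀ j : Fin (L-1), (∑ a, p i a * (if (j:ℕ) < (k:ℕ) then f a else 1))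
          = (if (j:ℕ) < (k:ℕ) then t i else 1) := by
        intro j
        by_cases hj : (j:ℕ) < (k:ℕ) <;> simp [hj, ht, hsum i]
      rw [Finset.prod_congr rfl (fun j _ => hfac j), Finset.prod_ite, Finset.prod_const,
        Finset.prod_const, one_pow, mul_one, card_filter_val_lt _ _ (by omega)]
    calc ∑ i, c i * t i ^ (k:ℕ)
        = ∑ i, c i * (∑ s : Fin (L-1) → S, (∏ j : Fin (L-1), p i (s j)) *
            ∏ j : Fin (L-1), (if (j:ℕ) < (k:ℕ) then f (s j) else 1)) := by
          simp_rw [key]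
      _ = ∑ s : Fin (L-1) → S, (∑ i, c i * ∏ j : Fin (L-1), p i (s j)) *
            ∏ j : Fin (L-1), (if (j:ℕ) < (k:ℕ) then f (s j) else 1) := by
          simp_rw [Finset.mul_sum, ← mul_assoc]
          rw [Finset.sum_comm]
          simp_rw [Finset.sum_mul]
      _ = 0 := by
          apply Finset.sum_eq_zero
          intro s _
          have := congrFun hc s
          simp only [Finset.sum_apply, Pi.smul_apply, smul_eq_mul, Pi.zero_apply] at this
          rw [this, zero_mul]
  have hz := Matrix.eq_zero_of_forall_pow_sum_mul_pow_eq_zero htinj (fun k => hpow k)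
  exact fun i => congrFun hz i
end

section
/- Let Ω be a finite set of states with |Ω| = L ≥ 2, let π be a probability mass function on Ω with π(ω) > 0 for every ω, let S be a finite nonempty set, and for each ω ∈ Ω let p_ω : S → ℝ be a probability mass function, with the p_ω pairwise distinct. Consider signals consisting of (L−1)-tuples s = (s₁, …, s_{L−1}) ∈ S^{L−1} drawn i.i.d. from p_ω conditional on ω, and for each s with positive total probability define the posterior vector μ(s) ∈ ℝ^Ω by μ(s)(ω) = π(ω)·∏_k p_ω(s_k) / Σ_{ω'} π(ω')·∏_k p_{ω'}(s_k). Then there exist L tuples s¹, …, s^L ∈ S^{L−1}, each with positive total probability, such that the L posterior vectors μ(s¹), …, μ(s^L) are linearly independent in ℝ^Ω. -/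
/-!
The vectors `ω ↦ π ω * ∏ k, p ω (s k)`, `s ∈ S^(L-1)`, span `ℝ^Ω`; hence `L` of them are linearly
independent, and dividing each by its (positive) total probability keeps them so.

For the spanning claim, let `c` be orthogonal to all of them. Expanding products of sums, `c π` is
then orthogonal to `ω ↦ ∏ k, r_k ω` for any `L - 1` statistics `r_k ω = ∑ s, f_k s * p ω s`; taking
`i` copies of one statistic `r` and padding with the constant statistic `1 = ∑ s, p ω s` gives
`∑ ω, c ω * π ω * r ω ^ i = 0` for all `i < L`. As the `p ω` are distinct and a vector space over an
infinite field is not a finite union of proper subspaces, some `r` is injective on `Ω`, and the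
Vandermonde determinant forces `c π = 0`.
-/

open Function Submodule

theorem Module.exists_dual_comp_injective {K V ι : Type*} [Field K] [Infinite K]
    [AddCommGroup V] [Module K V] [Finite ι] {v : ι → V} (hv : Function.Injective v) :
    ∃ φ : Module.Dual K V, Function.Injective (φ ∘ v) := by
  obtain ⟨φ, hφ⟩ := Module.exists_dual_forall_apply_ne_zero (K := K)
    (fun x : {x : ι × ι // x.1 ≠ x.2} => v x.1.1 - v x.1.2)
    fun x => sub_ne_zero.mpr (hv.ne x.2)
  exact ⟨φ, fun i j hij => by_contra fun hne => hφ ⟨(i, j), hne⟩ (by simpa [sub_eq_zero] using hij)⟩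

section Moments

variable {R Ω S : Type*} [CommRing R] [Fintype Ω] [Fintype S] {q : Ω → S → R} {c : Ω → R}

theorem sum_mul_prod_sum_eq_zero {ι : Type*} [Fintype ι] [DecidableEq ι]
    (hc : ∀ s : ι → S, ∑ ω, c ω * ∏ k, q ω (s k) = 0) (f : ι → S → R) :
    ∑ ω, c ω * ∏ k, ∑ s, f k s * q ω s = 0 := by
  have expand : ∀ ω, ∏ k, ∑ s, f k s * q ω s = ∑ s : ι → S, (∏ k, f k (s k)) * ∏ k, q ω (s k) :=
    fun ω => by simp_rw [Fintype.prod_sum, Finset.prod_mul_distrib]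
  simp_rw [expand, Finset.mul_sum, mul_left_comm (c _)]
  rw [Finset.sum_comm]
  simp_rw [← Finset.mul_sum, hc, mul_zero, Finset.sum_const_zero]

theorem sum_mul_pow_sum_eq_zero {n : ℕ} (hq : ∀ ω, ∑ s, q ω s = 1)
    (hc : ∀ s : Fin n → S, ∑ ω, c ω * ∏ k, q ω (s k) = 0) (f : S → R) {i : ℕ} (hi : i ≤ n) :
    ∑ ω, c ω * (∑ s, f s * q ω s) ^ i = 0 := by
  convert sum_mul_prod_sum_eq_zero hc (fun k => if (k : ℕ) < i then f else 1) using 3 with ω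
  simp_rw [apply_ite (fun g : S → R => ∑ s, g s * q ω s), Pi.one_apply, one_mul, hq]
  rw [Finset.prod_ite, Finset.prod_const, Finset.prod_const_one, mul_one,
    Fin.card_filter_val_lt, min_eq_right hi]

end Moments

theorem eq_zero_of_forall_sum_mul_prod_eq_zero {K Ω S : Type*} [Field K] [Infinite K]
    [Fintype Ω] [Fintype S] {n : ℕ} (hn : Fintype.card Ω ≤ n + 1)
    {q : Ω → S → K} (hq_inj : Injective q) (hq : ∀ ω, ∑ s, q ω s = 1) {c : Ω → K}
    (hc : ∀ s : Fin n → S, ∑ ω, c ω * ∏ k, q ω (s k) = 0) : c = 0 := by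
  classical
  obtain ⟨φ, hφ⟩ := Module.exists_dual_comp_injective (K := K) hq_inj
  set f := (dotProductEquiv K S).symm φ
  have hφf : ∀ ω, φ (q ω) = ∑ s, f s * q ω s := fun ω => by
    rw [← (dotProductEquiv K S).apply_symm_apply φ]
    rfl
  let e := Fintype.equivFin Ω
  have hvandermonde : c ∘ e.symm = 0 := by
    refine Matrix.eq_zero_of_forall_pow_sum_mul_pow_eq_zero (f := φ ∘ q ∘ e.symm)
      (hφ.comp e.symm.injective) fun i => ?_
    rw [← sum_mul_pow_sum_eq_zero hq hc f (by omega : (i : ℕ) ≤ n)]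
    exact e.symm.sum_comp (fun ω => c ω * φ (q ω) ^ (i : ℕ)) |>.trans (by simp_rw [hφf])
  funext ω
  simpa using congrFun hvandermonde (e ω)

theorem span_range_eq_top_of_forall_dotProduct_eq_zero {K Ω ι : Type*} [Field K] [Fintype Ω]
    {v : ι → Ω → K} (h : ∀ c : Ω → K, (∀ i, c ⬝ᵥ v i = 0) → c = 0) :
    span K (Set.range v) = ⊤ := by
  classical
  rw [← dualAnnihilator_eq_bot_iff, eq_bot_iff]
  intro φ hφ
  have hc := h ((dotProductEquiv K Ω).symm φ) fun i => by
    rw [← dotProductEquiv_apply_apply, LinearEquiv.apply_symm_apply]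
    exact (mem_dualAnnihilator φ).mp hφ _ (subset_span (Set.mem_range_self i))
  rw [mem_bot, ← (dotProductEquiv K Ω).apply_symm_apply φ, hc, map_zero]

theorem exists_linearIndependent_comp_of_span_eq_top {K V ι : Type*} [Field K] [AddCommGroup V]
    [Module K V] [FiniteDimensional K V] {v : ι → V} (hv : span K (Set.range v) = ⊤) :
    ∃ t : Fin (Module.finrank K V) → ι, LinearIndependent K (v ∘ t) := by
  obtain ⟨κ, a, -, hspan, hli⟩ := exists_linearIndependent' K v
  let b := Module.Basis.mk hli (by rw [hspan, hv])
  let e := (Module.finBasis K V).indexEquiv b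
  exact ⟨a ∘ e, hli.comp e e.injective⟩
theorem posteriors_full_rank_general
    {Ω : Type*} [Fintype Ω] {L : ℕ} (hcard : Fintype.card Ω = L)
    {S : Type*} [Fintype S]
    (π : Ω → ℝ) (hπ : ∀ ω, 0 < π ω)
    (p : Ω → S → ℝ) (hp : ∀ ω s, 0 ≤ p ω s) (hpsum : ∀ ω, ∑ s, p ω s = 1)
    (hdistinct : Function.Injective p) :
    ∃ t : Fin L → (Fin (L - 1) → S),
      (∀ j, 0 < ∑ ω, π ω * ∏ k, p ω (t j k)) ∧
      LinearIndependent ℝ (fun j : Fin L => fun ω : Ω =>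
        π ω * (∏ k, p ω (t j k)) / ∑ ω', π ω' * ∏ k, p ω' (t j k)) := by
  set v : (Fin (L - 1) → S) → Ω → ℝ := fun s ω => π ω * ∏ k, p ω (s k)
  have hspan : span ℝ (Set.range v) = ⊤ := by
    refine span_range_eq_top_of_forall_dotProduct_eq_zero fun c hc => ?_
    have hcπ : c * π = 0 := eq_zero_of_forall_sum_mul_prod_eq_zero (n := L - 1) (by omega)
      hdistinct hpsum fun s => by simpa only [dotProduct, Pi.mul_apply, mul_assoc] using hc s
    funext ω
    exact (mul_eq_zero.mp (congrFun hcπ ω)).resolve_right (hπ ω).ne'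
  obtain ⟨t, ht⟩ : ∃ t : Fin L → Fin (L - 1) → S, LinearIndependent ℝ (v ∘ t) := by
    have h := exists_linearIndependent_comp_of_span_eq_top hspan
    rwa [Module.finrank_pi, hcard] at h
  have hZ : ∀ j, 0 < ∑ ω, v (t j) ω := fun j => by
    obtain ⟨ω₀, hω₀⟩ := Function.ne_iff.mp (ht.ne_zero j)
    have hnonneg : ∀ ω, 0 ≤ v (t j) ω := fun ω =>
      mul_nonneg (hπ ω).le (Finset.prod_nonneg fun k _ => hp ω _)
    exact Finset.sum_pos' (fun ω _ => hnonneg ω) ⟨ω₀, Finset.mem_univ _, (hnonneg ω₀).lt_of_ne' hω₀⟩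
  refine ⟨t, hZ, ?_⟩
  convert ht.units_smul fun j => Units.mk0 _ (inv_ne_zero (hZ j).ne') using 1
  ext j ω
  simp [v, div_eq_inv_mul]

/-- Claim 1 of the paper: in a finite-state Bayesian model with prior `π` on a state
space of cardinality `L ≥ 2` and conditionally i.i.d. signals with pairwise distinct
state-dependent distributions `p ω`, after observing `L − 1` i.i.d. draws there exist
`L` signal tuples, each with positive total probability, whose posterior vectors are
linearly independent in `ℝ^Ω`. -/
theorem posteriors_full_rank
    {Ω : Type*} [Fintype Ω] {L : ℕ} (hL : 2 ≤ L) (hcard : Fintype.card Ω = L)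
    {S : Type*} [Fintype S] [Nonempty S]
    (π : Ω → ℝ) (hπ : ∀ ω, 0 < π ω) (hπsum : ∑ ω, π ω = 1)
    (p : Ω → S → ℝ) (hp : ∀ ω s, 0 ≤ p ω s) (hpsum : ∀ ω, ∑ s, p ω s = 1)
    (hdistinct : Function.Injective p) :
    ∃ t : Fin L → (Fin (L - 1) → S),
      (∀ j, 0 < ∑ ω, π ω * ∏ k, p ω (t j k)) ∧
      LinearIndependent ℝ (fun j : Fin L => fun ω : Ω =>
        π ω * (∏ k, p ω (t j k)) / ∑ ω', π ω' * ∏ k, p ω' (t j k)) :=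
  posteriors_full_rank_general hcard π hπ p hp hpsum hdistinct
end

section
/- Let (ζ_i)_{i∈ℕ} be an independent family of real-valued random variables with E[ζ_i] = 0 and |ζ_i| ≤ K almost surely for some constant K, and let (x_i)_{i∈ℕ} be an i.i.d. family of {0,1}-valued random variables with P(x_i = 1) = p > 0, such that the family (x_i)_i is independent of the family (ζ_i)_i. Let c ∈ ℝ. For each n, let N¹_n = { i ≤ n : x_i = 1 }, and define ρ_n = (1/|N¹_n|)·Σ_{i ∈ N¹_n} ζ_i if N¹_n is nonempty and ρ_n = c otherwise. Then ρ_n → 0 almost surely as n → ∞. -/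
/-!
Put `Y i = x i * ζ i`. Independence of the two families and `E[ζ i] = 0` make the `Y i`
pairwise orthogonal, so `E[(∑_{i<n} Y i)²] ≤ n K²`. Along the squares this gives
`∑_m E[(S_{m²} / m²)²] < ∞`, hence `S_{m²} / m² → 0` a.s., and the bounded increments
carry the convergence to all `n` (Rajchman's argument). Meanwhile `|N¹_n| / n → p > 0` by
the strong law for the i.i.d. `x i`, and `ρ_n = (S_n / n) / (|N¹_n| / n)` once `N¹_n` is
nonempty.
-/

open MeasureTheory ProbabilityTheory Filter Topology Finset

section

variable {Ω : Type*} [MeasurableSpace Ω] {μ : Measure Ω}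

theorem ae_tendsto_zero_of_summable_integral_sq {g : ℕ → Ω → ℝ}
    (hg : ∀ m, MemLp (g m) 2 μ) (hsum : Summable fun m => ∫ ω, g m ω ^ 2 ∂μ) :
    ∀ᵐ ω ∂μ, Tendsto (fun m => g m ω) atTop (𝓝 0) := by
  have hint : ∀ m, Integrable (fun ω => g m ω ^ 2) μ := fun m => (hg m).integrable_sq
  have hF : ∀ m, AEMeasurable (fun ω => ENNReal.ofReal (g m ω ^ 2)) μ :=
    fun m => (hint m).aemeasurable.ennreal_ofReal
  have hlint : ∫⁻ ω, ∑' m, ENNReal.ofReal (g m ω ^ 2) ∂μ ≠ ⊤ := by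
    rw [lintegral_tsum hF]
    simp_rw [← ofReal_integral_eq_lintegral_ofReal (hint _) (ae_of_all _ fun ω => sq_nonneg _)]
    rw [← ENNReal.ofReal_tsum_of_nonneg (fun m => integral_nonneg fun ω => sq_nonneg _) hsum]
    exact ENNReal.ofReal_ne_top
  filter_upwards [ae_lt_top' (AEMeasurable.tsum hF) hlint] with ω hω
  have hsq : Tendsto (fun m => g m ω ^ 2) atTop (𝓝 0) := by
    have := (ENNReal.tendsto_toReal ENNReal.zero_ne_top).comp
      (ENNReal.tendsto_atTop_zero_of_tsum_ne_top hω.ne)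
    simpa [Function.comp_def, sq_nonneg] using this
  rw [tendsto_zero_iff_abs_tendsto_zero]
  simpa [Function.comp_def, Real.sqrt_sq_eq_abs] using hsq.sqrt

theorem integral_sum_sq_of_pairwise_integral_mul_eq_zero {ι : Type*} {Y : ι → Ω → ℝ}
    (hY : ∀ i, MemLp (Y i) 2 μ) (horth : Pairwise fun i j => ∫ ω, Y i ω * Y j ω ∂μ = 0)
    (s : Finset ι) :
    ∫ ω, (∑ i ∈ s, Y i ω) ^ 2 ∂μ = ∑ i ∈ s, ∫ ω, Y i ω ^ 2 ∂μ := by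
  have hint : ∀ i j, Integrable (fun ω => Y i ω * Y j ω) μ :=
    fun i j => (hY i).integrable_mul (hY j)
  simp_rw [sq, sum_mul_sum]
  rw [integral_finsetSum _ fun i _ => integrable_finsetSum _ fun j _ => hint i j]
  refine sum_congr rfl fun i hi => ?_
  rw [integral_finsetSum _ fun j _ => hint i j]
  exact sum_eq_single_of_mem i hi fun j _ hji => horth hji.symm

theorem tendsto_sum_div_of_tendsto_sum_sq_div {y : ℕ → ℝ} {K : ℝ} (hy : ∀ i, |y i| ≤ K)
    (h : Tendsto (fun m : ℕ => (∑ i ∈ range (m ^ 2), y i) / (m : ℝ) ^ 2) atTop (𝓝 0)) :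
    Tendsto (fun n : ℕ => (∑ i ∈ range n, y i) / n) atTop (𝓝 0) := by
  have hK : 0 ≤ K := (abs_nonneg _).trans (hy 0)
  have hbound : ∀ n, 1 ≤ n → |(∑ i ∈ range n, y i) / n| ≤
      |(∑ i ∈ range (n.sqrt ^ 2), y i) / (n.sqrt : ℝ) ^ 2| + 2 * K / n.sqrt := by
    intro n hn
    set r := n.sqrt
    have hrn : r ^ 2 ≤ n := Nat.sqrt_le' n
    have hnr : n - r ^ 2 ≤ 2 * r := by
      have hlt : n < (r + 1) ^ 2 := Nat.lt_succ_sqrt' n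
      rw [add_sq] at hlt
      omega
    have hdiff : |∑ i ∈ range n, y i - ∑ i ∈ range (r ^ 2), y i| ≤ 2 * K * r := calc
      _ = |∑ i ∈ Ico (r ^ 2) n, y i| := by rw [sum_Ico_eq_sub _ hrn]
      _ ≤ ∑ i ∈ Ico (r ^ 2) n, K :=
        (abs_sum_le_sum_abs _ _).trans (sum_le_sum fun i _ => hy i)
      _ = (n - r ^ 2 : ℕ) * K := by simp
      _ ≤ 2 * K * r := by
        have : ((n - r ^ 2 : ℕ) : ℝ) ≤ 2 * r := by exact_mod_cast hnr
        nlinarith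
    have hrn' : (r : ℝ) ^ 2 ≤ n := by exact_mod_cast hrn
    rw [abs_div, abs_div, abs_of_pos (by positivity : (0 : ℝ) < n),
      abs_of_pos (by positivity : (0 : ℝ) < (r : ℝ) ^ 2)]
    calc |∑ i ∈ range n, y i| / n
        ≤ (|∑ i ∈ range (r ^ 2), y i| + 2 * K * r) / (r : ℝ) ^ 2 := by
          gcongr
          linarith [abs_sub_abs_le_abs_sub (∑ i ∈ range n, y i) (∑ i ∈ range (r ^ 2), y i)]
      _ = _ := by field_simp
  have hsqrt : Tendsto Nat.sqrt atTop atTop :=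
    tendsto_atTop_atTop.mpr fun b => ⟨b * b, fun a ha => Nat.le_sqrt.mpr ha⟩
  refine squeeze_zero_norm' (eventually_atTop.mpr ⟨1, hbound⟩) ?_
  simpa using
    (h.abs.comp hsqrt).add ((tendsto_const_div_atTop_nhds_zero_nat (2 * K)).comp hsqrt)

theorem ae_tendsto_sum_div_of_pairwise_integral_mul_eq_zero [IsProbabilityMeasure μ]
    {Y : ℕ → Ω → ℝ} {K : ℝ} (hmeas : ∀ i, AEStronglyMeasurable (Y i) μ)
    (hbdd : ∀ i, ∀ᵐ ω ∂μ, |Y i ω| ≤ K)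
    (horth : Pairwise fun i j => ∫ ω, Y i ω * Y j ω ∂μ = 0) :
    ∀ᵐ ω ∂μ, Tendsto (fun n : ℕ => (∑ i ∈ range n, Y i ω) / n) atTop (𝓝 0) := by
  have hL2 : ∀ i, MemLp (Y i) 2 μ := fun i => MemLp.of_bound (hmeas i) K (hbdd i)
  have hmoment : ∀ n, ∫ ω, (∑ i ∈ range n, Y i ω) ^ 2 ∂μ ≤ n * K ^ 2 := by
    intro n
    rw [integral_sum_sq_of_pairwise_integral_mul_eq_zero hL2 horth]
    refine (sum_le_sum fun i _ => ?_).trans_eq (by rw [sum_const, card_range, nsmul_eq_mul])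
    refine (integral_mono_ae (hL2 i).integrable_sq (integrable_const (K ^ 2)) ?_).trans_eq
      (by simp)
    filter_upwards [hbdd i] with ω hω
    exact sq_le_sq' (abs_le.mp hω).1 (abs_le.mp hω).2
  have hsquares : ∀ᵐ ω ∂μ,
      Tendsto (fun m : ℕ => (∑ i ∈ range (m ^ 2), Y i ω) / (m : ℝ) ^ 2) atTop (𝓝 0) := by
    refine ae_tendsto_zero_of_summable_integral_sq
      (fun m => (memLp_finsetSum _ fun i _ => hL2 i).mul_const _) ?_
    refine Summable.of_nonneg_of_le (fun m => integral_nonneg fun ω => sq_nonneg _) (fun m => ?_)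
      ((Real.summable_nat_pow_inv.mpr one_lt_two).mul_left (K ^ 2))
    simp_rw [div_pow, integral_div]
    rcases Nat.eq_zero_or_pos m with rfl | hm
    · simp
    calc (∫ ω, (∑ i ∈ range (m ^ 2), Y i ω) ^ 2 ∂μ) / ((m : ℝ) ^ 2) ^ 2
        ≤ ((m ^ 2 : ℕ) * K ^ 2) / ((m : ℝ) ^ 2) ^ 2 := by gcongr; exact hmoment _
      _ = K ^ 2 * ((m : ℝ) ^ 2)⁻¹ := by field_simp; push_cast; ring
  filter_upwards [hsquares, ae_all_iff.mpr hbdd] with ω hω hYω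
  exact tendsto_sum_div_of_tendsto_sum_sq_div hYω hω

theorem pairwise_integral_mul_mul_eq_zero_of_indep {ι : Type*} {X Z : ι → Ω → ℝ}
    (hX : ∀ i, Measurable (X i)) (hZ : ∀ i, Measurable (Z i))
    (hZindep : Pairwise fun i j => Z i ⟂ᵢ[μ] Z j) (hZmean : ∀ i, ∫ ω, Z i ω ∂μ = 0)
    (hXZ : Indep (⨆ i, MeasurableSpace.comap (X i) inferInstance)
      (⨆ i, MeasurableSpace.comap (Z i) inferInstance) μ) :
    Pairwise fun i j => ∫ ω, X i ω * Z i ω * (X j ω * Z j ω) ∂μ = 0 := by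
  intro i j hij
  have hXsup : ∀ k, Measurable[⨆ l, MeasurableSpace.comap (X l) inferInstance] (X k) :=
    fun k => Measurable.of_comap_le (le_iSup (fun l => MeasurableSpace.comap (X l) _) k)
  have hZsup : ∀ k, Measurable[⨆ l, MeasurableSpace.comap (Z l) inferInstance] (Z k) :=
    fun k => Measurable.of_comap_le (le_iSup (fun l => MeasurableSpace.comap (Z l) _) k)
  have hprod : (fun ω => X i ω * X j ω) ⟂ᵢ[μ] (fun ω => Z i ω * Z j ω) :=
    indep_of_indep_of_le_right
      (indep_of_indep_of_le_left hXZ ((hXsup i).mul (hXsup j)).comap_le)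
      ((hZsup i).mul (hZsup j)).comap_le
  calc ∫ ω, X i ω * Z i ω * (X j ω * Z j ω) ∂μ
      = ∫ ω, (X i ω * X j ω) * (Z i ω * Z j ω) ∂μ := by congr 1 with ω; ring
    _ = (∫ ω, X i ω * X j ω ∂μ) * ∫ ω, Z i ω * Z j ω ∂μ :=
      hprod.integral_fun_mul_eq_mul_integral ((hX i).mul (hX j)).aestronglyMeasurable
        ((hZ i).mul (hZ j)).aestronglyMeasurable
    _ = 0 := by
      rw [(hZindep hij).integral_fun_mul_eq_mul_integral (hZ i).aestronglyMeasurable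
        (hZ j).aestronglyMeasurable, hZmean i, zero_mul, mul_zero]

theorem tendsto_average_over_filter_eq_one {x ζ : ℕ → ℝ} {p : ℝ} (c : ℝ)
    (hx01 : ∀ i, x i = 0 ∨ x i = 1) (hp : p ≠ 0)
    (hx : Tendsto (fun n : ℕ => (∑ i ∈ range n, x i) / n) atTop (𝓝 p))
    (hxζ : Tendsto (fun n : ℕ => (∑ i ∈ range n, x i * ζ i) / n) atTop (𝓝 0)) :
    Tendsto (fun n : ℕ =>
        let N := (range n).filter (fun i => x i = 1)
        if N.Nonempty then (N.card : ℝ)⁻¹ * ∑ i ∈ N, ζ i else c)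
      atTop (𝓝 0) := by
  have hcard : ∀ n,
      (((range n).filter (fun i => x i = 1)).card : ℝ) = ∑ i ∈ range n, x i := by
    intro n
    rw [← sum_boole]
    exact sum_congr rfl fun i _ => by rcases hx01 i with h | h <;> simp [h]
  have hsum : ∀ n,
      ∑ i ∈ (range n).filter (fun i => x i = 1), ζ i = ∑ i ∈ range n, x i * ζ i := by
    intro n
    rw [sum_filter]
    exact sum_congr rfl fun i _ => by rcases hx01 i with h | h <;> simp [h]
  refine (zero_div p ▸ hxζ.div hx hp).congr' ?_
  filter_upwards [hx.eventually_ne hp] with n hn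
  obtain ⟨hpos, hn⟩ := div_ne_zero_iff.mp hn
  have hne : ((range n).filter (fun i => x i = 1)).Nonempty := by
    rw [← card_ne_zero, ← Nat.cast_ne_zero (R := ℝ), hcard]
    exact hpos
  simp only [Pi.div_apply, if_pos hne, hcard, hsum]
  field_simp

theorem integral_eq_measureReal_eq_one {f : Ω → ℝ} (hf : Measurable f)
    (h01 : ∀ ω, f ω = 0 ∨ f ω = 1) : ∫ ω, f ω ∂μ = μ.real {ω | f ω = 1} := by
  rw [← integral_indicator_one (s := {ω | f ω = 1}) (hf (measurableSet_singleton 1))]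
  congr 1 with ω
  rcases h01 ω with h | h <;> simp [h]

end

/-- Lemma B.1 of the paper: a strong law of large numbers over randomly selected
subpopulations. If `(ζ_i)` are independent, mean-zero, uniformly bounded random
variables, and `(x_i)` are i.i.d. `{0,1}`-valued indicators with success
probability `p > 0`, the family `(x_i)` independent of `(ζ_i)`, then the average
of the `ζ_i` over the random subset `N¹_n = {i ≤ n : x_i = 1}` (set to a default
constant `c` when the subset is empty) converges to `0` almost surely. -/
theorem slln_random_subset
    {Ω : Type*} [MeasurableSpace Ω] (P : Measure Ω) [IsProbabilityMeasure P]
    (ζ : ℕ → Ω → ℝ) (x : ℕ → Ω → ℝ) (K : ℝ) (p : ℝ) (c : ℝ)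
    (hζmeas : ∀ i, Measurable (ζ i))
    (hζindep : iIndepFun ζ P)
    (hζmean : ∀ i, ∫ ω, ζ i ω ∂P = 0)
    (hζbdd : ∀ i, ∀ᵐ ω ∂P, |ζ i ω| ≤ K)
    (hxmeas : ∀ i, Measurable (x i))
    (hx01 : ∀ i ω, x i ω = 0 ∨ x i ω = 1)
    (hxindep : iIndepFun x P)
    (hxident : ∀ i, P.map (x i) = P.map (x 0))
    (hp : 0 < p)
    (hxp : ∀ i, (P {ω | x i ω = 1}).toReal = p)
    (hfamindep : Indep (⨆ i, MeasurableSpace.comap (x i) inferInstance)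
                       (⨆ i, MeasurableSpace.comap (ζ i) inferInstance) P) :
    ∀ᵐ ω ∂P, Tendsto
      (fun n : ℕ =>
        let N := (Finset.range n).filter (fun i => x i ω = 1)
        if N.Nonempty then (N.card : ℝ)⁻¹ * ∑ i ∈ N, ζ i ω else c)
      atTop (nhds 0) := by
  have hmean : ∫ ω, x 0 ω ∂P = p :=
    (integral_eq_measureReal_eq_one (hxmeas 0) (hx01 0)).trans (hxp 0)
  have hbdd : ∀ i, ∀ᵐ ω ∂P, |x i ω * ζ i ω| ≤ K := fun i => by
    filter_upwards [hζbdd i] with ω hω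
    rcases hx01 i ω with h | h <;> simp [h, hω, (abs_nonneg _).trans hω]
  have hsubset := ae_tendsto_sum_div_of_pairwise_integral_mul_eq_zero
    (fun i => ((hxmeas i).mul (hζmeas i)).aestronglyMeasurable) hbdd
    (pairwise_integral_mul_mul_eq_zero_of_indep hxmeas hζmeas
      (fun _ _ hij => hζindep.indepFun hij) hζmean hfamindep)
  have hfrequency := strong_law_ae_real x
    (Integrable.of_bound (hxmeas 0).aestronglyMeasurable 1
      (ae_of_all _ fun ω => by rcases hx01 0 ω with h | h <;> simp [h]))
    (fun _ _ hij => hxindep.indepFun hij)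
    (fun i => ⟨(hxmeas i).aemeasurable, (hxmeas 0).aemeasurable, hxident i⟩)
  filter_upwards [hfrequency, hsubset] with ω hxω hxζω
  exact tendsto_average_over_filter_eq_one c (fun i => hx01 i ω) hp.ne' (hmean ▸ hxω) hxζω
end
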